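/- arXiv:1704.00767 — 15 statements merged into one kernel-verified Lean document; each statement's English description precedes it below -/
import Mathlib

section
/- Suppose the data points x₁,…,xₙ are affinely independent. Then there exists a vector v lying in the vectorSpan of the data that gives complete data piling, and it is unique up to nonzero scalar multiple: if v and v' both lie in the vectorSpan of the data and both give complete data piling, then v' = t • v for some real t ≠ 0. -/
open scoped RealInnerProductSpace BigOperators

variable {E : Type*} [NormedAddCommGroup E] [InnerProductSpace ℝ E]

/-- A vector `v` gives complete data piling for the labeled data `(x, y)`. -/
def Piling {n : ℕ} (x : Fin n → E) (y : Fin n → ℝ) (v : E) : Prop :=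
  ∃ a b : ℝ, a ≠ 0 ∧ ∀ i, ⟪v, x i⟫ = a * y i + b

/-!
Affine independence makes the differences `x i - x i₀` (`i ≠ i₀`) a basis of the vector span,
so the functional `x i - x i₀ ↦ y i - y i₀` on it is represented (Riesz, in finite dimension) by
some `v` in the span, and then `⟪v, x i⟫ = y i + c`. Conversely, if `v, v'` pile with slopes
`a, a'`, then `v' - (a'/a) • v` has constant inner product with the data, so it is orthogonal to
the vector span while lying in it, hence vanishes.
-/

theorem exists_mem_span_inner_eq_of_linearIndependent {ι : Type*} [Finite ι] {b : ι → E}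
    (hb : LinearIndependent ℝ b) (f : ι → ℝ) :
    ∃ v ∈ Submodule.span ℝ (Set.range b), ∀ i, ⟪v, b i⟫ = f i := by
  set K := Submodule.span ℝ (Set.range b)
  have : FiniteDimensional ℝ K := FiniteDimensional.span_of_finite ℝ (Set.finite_range b)
  let basis : Module.Basis ι ℝ K := Module.Basis.span hb
  let ℓ : K →L[ℝ] ℝ := LinearMap.toContinuousLinearMap (basis.constr ℝ f)
  refine ⟨(InnerProductSpace.toDual ℝ K).symm ℓ, Submodule.coe_mem _, fun i => ?_⟩
  have hbasis : ((basis i : K) : E) = b i := congrArg Subtype.val (Module.Basis.span_apply hb i)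
  rw [← hbasis, ← Submodule.coe_inner, InnerProductSpace.toDual_symm_apply]
  simp [ℓ, Module.Basis.constr_basis]

theorem exists_mem_vectorSpan_inner_eq_add_const_of_affineIndependent {ι : Type*} [Finite ι]
    {x : ι → E} (hx : AffineIndependent ℝ x) (f : ι → ℝ) :
    ∃ v ∈ vectorSpan ℝ (Set.range x), ∃ c : ℝ, ∀ i, ⟪v, x i⟫ = f i + c := by
  cases isEmpty_or_nonempty ι with
  | inl => exact ⟨0, Submodule.zero_mem _, 0, isEmptyElim⟩
  | inr hne =>
    obtain ⟨i₀⟩ := hne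
    obtain ⟨v, hv, hvx⟩ := exists_mem_span_inner_eq_of_linearIndependent
      ((affineIndependent_iff_linearIndependent_vsub ℝ x i₀).1 hx)
      (fun i : {j // j ≠ i₀} => f i - f i₀)
    refine ⟨v, (vectorSpan_range_eq_span_range_vsub_right_ne ℝ x i₀).symm ▸ hv,
      ⟪v, x i₀⟫ - f i₀, fun i => ?_⟩
    by_cases hi : i = i₀
    · subst hi; ring
    · have := hvx ⟨i, hi⟩
      rw [vsub_eq_sub, inner_sub_right] at this
      linarith

theorem eq_zero_of_mem_vectorSpan_of_inner_const {ι : Type*} {x : ι → E} {w : E}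
    (hw : w ∈ vectorSpan ℝ (Set.range x)) (hconst : ∀ i j, ⟪w, x i⟫ = ⟪w, x j⟫) : w = 0 := by
  have hle : vectorSpan ℝ (Set.range x) ≤ (ℝ ∙ w)ᗮ := by
    refine Submodule.span_le.2 ?_
    rintro _ ⟨_, ⟨i, rfl⟩, _, ⟨j, rfl⟩, rfl⟩
    rw [SetLike.mem_coe, Submodule.mem_orthogonal_singleton_iff_inner_right]
    change ⟪w, x i - x j⟫ = 0
    rw [inner_sub_right, hconst i j, sub_self]
  exact inner_self_eq_zero.1 (Submodule.mem_orthogonal_singleton_iff_inner_right.1 (hle hw))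

namespace Piling

variable {n : ℕ} {x : Fin n → E}

theorem exists_mem_vectorSpan (hx : AffineIndependent ℝ x) (y : Fin n → ℝ) :
    ∃ v ∈ vectorSpan ℝ (Set.range x), Piling x y v := by
  obtain ⟨v, hv, c, hc⟩ := exists_mem_vectorSpan_inner_eq_add_const_of_affineIndependent hx y
  exact ⟨v, hv, 1, c, one_ne_zero, by simpa using hc⟩

theorem exists_ne_zero_eq_smul {y : Fin n → ℝ} {v v' : E} (hv : v ∈ vectorSpan ℝ (Set.range x))
    (hv' : v' ∈ vectorSpan ℝ (Set.range x)) (h : Piling x y v) (h' : Piling x y v') :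
    ∃ t : ℝ, t ≠ 0 ∧ v' = t • v := by
  obtain ⟨a, b, ha, hab⟩ := h
  obtain ⟨a', b', ha', hab'⟩ := h'
  refine ⟨a' / a, div_ne_zero ha' ha, sub_eq_zero.1 ?_⟩
  have hinner : ∀ i, ⟪v' - (a' / a) • v, x i⟫ = b' - a' / a * b := by
    intro i
    rw [inner_sub_left, real_inner_smul_left, hab, hab']
    field_simp
    ring
  exact eq_zero_of_mem_vectorSpan_of_inner_const
    (Submodule.sub_mem _ hv' (Submodule.smul_mem _ _ hv)) fun i j => by rw [hinner, hinner]

end Piling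

theorem affine_piling_exists_unique_general {n : ℕ} (x : Fin n → E) (y : Fin n → ℝ)
    (hind : AffineIndependent ℝ x) :
    (∃ v ∈ vectorSpan ℝ (Set.range x), Piling x y v) ∧
      ∀ v v' : E, v ∈ vectorSpan ℝ (Set.range x) → v' ∈ vectorSpan ℝ (Set.range x) →
        Piling x y v → Piling x y v' → ∃ t : ℝ, t ≠ 0 ∧ v' = t • v :=
  ⟨Piling.exists_mem_vectorSpan hind y,
    fun _ _ hv hv' h h' => Piling.exists_ne_zero_eq_smul hv hv' h h'⟩

theorem affine_piling_exists_unique {n : ℕ} (x : Fin n → E) (y : Fin n → ℝ)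
    (hy : ∀ i, y i = 1 ∨ y i = -1)
    (hpos : ∃ i, y i = 1) (hneg : ∃ i, y i = -1)
    (hind : AffineIndependent ℝ x) :
    (∃ v ∈ vectorSpan ℝ (Set.range x), Piling x y v) ∧
      ∀ v v' : E, v ∈ vectorSpan ℝ (Set.range x) → v' ∈ vectorSpan ℝ (Set.range x) →
        Piling x y v → Piling x y v' → ∃ t : ℝ, t ≠ 0 ∧ v' = t • v :=
  affine_piling_exists_unique_general x y hind
end

section
/- Suppose the data points x₁,…,xₙ are affinely independent. Let v be a unit vector lying in the vectorSpan of the data with ⟪v, x i⟫ = a_v * y i + b_v for all i, where a_v > 0. If w is any unit vector in E satisfying ⟪w, x i⟫ = a_w * y i + b_w for all i with a_w > 0, then a_w ≤ a_v, and a_w = a_v only if w = v. (That is, the unique complete data piling direction in the affine hull is the maximal data piling direction.) -/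
open scoped RealInnerProductSpace BigOperators

variable {E : Type*} [NormedAddCommGroup E] [InnerProductSpace ℝ E]

theorem affine_piling_is_maximal {n : ℕ} (x : Fin n → E) (y : Fin n → ℝ)
    (hy : ∀ i, y i = 1 ∨ y i = -1)
    (hpos : ∃ i, y i = 1) (hneg : ∃ i, y i = -1)
    (hind : AffineIndependent ℝ x)
    (v : E) (hv_norm : ‖v‖ = 1) (hv_span : v ∈ vectorSpan ℝ (Set.range x))
    (a_v b_v : ℝ) (ha_v : 0 < a_v) (hv_pile : ∀ i, ⟪v, x i⟫ = a_v * y i + b_v)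
    (w : E) (hw_norm : ‖w‖ = 1)
    (a_w b_w : ℝ) (ha_w : 0 < a_w) (hw_pile : ∀ i, ⟪w, x i⟫ = a_w * y i + b_w) :
    a_w ≤ a_v ∧ (a_w = a_v → w = v) := by
  obtain ⟨c, hc_pos, hcc⟩ : ∃ c : ℝ, 0 < c ∧ c * a_v = a_w :=
    ⟨a_w / a_v, div_pos ha_w ha_v, div_mul_cancel₀ a_w ha_v.ne'⟩
  -- w - c • v is orthogonal to the vectorSpan
  have horth : ∀ d ∈ vectorSpan ℝ (Set.range x), ⟪w - c • v, d⟫ = 0 := by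
    intro d hd
    rw [vectorSpan] at hd
    induction hd using Submodule.span_induction with
    | mem p hp =>
      rw [Set.mem_vsub] at hp
      obtain ⟨p1, hp1, p2, hp2, rfl⟩ := hp
      obtain ⟨i, rfl⟩ := hp1
      obtain ⟨j, rfl⟩ := hp2
      have hxy : (x i : E) -ᵥ x j = x i - x j := rfl
      rw [hxy, inner_sub_left, inner_sub_right, inner_sub_right,
        real_inner_smul_left, real_inner_smul_left, hv_pile, hv_pile,
        hw_pile, hw_pile]
      linear_combination (y j - y i) * hcc
    | zero => simp
    | add a b _ _ ha hb => rw [inner_add_right, ha, hb, add_zero]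
    | smul r a _ ha => rw [real_inner_smul_right, ha, mul_zero]
  have hwv : ⟪w, v⟫ = c := by
    have := horth v hv_span
    rw [inner_sub_left, real_inner_smul_left, real_inner_self_eq_norm_sq,
      hv_norm] at this
    linarith
  have hkey : ‖w - c • v‖ ^ 2 = 1 - c ^ 2 := by
    rw [norm_sub_sq_real, real_inner_smul_right, hwv, norm_smul,
      hw_norm, hv_norm]
    simp [abs_of_pos hc_pos]
    ring
  have hc_le : c ≤ 1 := by
    nlinarith [sq_nonneg (‖w - c • v‖ : ℝ), hkey]
  have haw : a_w ≤ a_v := by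
    calc a_w = c * a_v := hcc.symm
    _ ≤ 1 * a_v := by apply mul_le_mul_of_nonneg_right hc_le ha_v.le
    _ = a_v := one_mul _
  refine ⟨haw, fun heq => ?_⟩
  have hc1 : c = 1 := by
    have : c * a_v = 1 * a_v := by rw [hcc, heq, one_mul]
    exact mul_right_cancel₀ ha_v.ne' this
  have hz : ‖w - c • v‖ ^ 2 = 0 := by rw [hkey, hc1]; ring
  have h0 : w - c • v = 0 := by
    have := pow_eq_zero_iff (n := 2) (by norm_num) |>.mp hz
    exact norm_eq_zero.mp this
  have hwc : w = c • v := by linear_combination (norm := module) h0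
  rw [hwc, hc1, one_smul]
end

section
/- Suppose the data points x₁,…,xₙ are affinely independent. If v and v' are both convex directions that give complete data piling, then v' = t • v for some real t ≠ 0. In other words, the intersection of the set of convex directions with the set of complete data piling directions is either empty or consists of a single direction. -/
open scoped RealInnerProductSpace BigOperators

variable {E : Type*} [NormedAddCommGroup E] [InnerProductSpace ℝ E]

/-- A vector `v` is a convex direction: a nonzero multiple of a difference of points of the
convex hulls of the two classes. -/
def ConvexDir {n : ℕ} (x : Fin n → E) (y : Fin n → ℝ) (v : E) : Prop :=
  ∃ t : ℝ, t ≠ 0 ∧ ∃ cp ∈ convexHull ℝ (x '' {i | y i = 1}),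
    ∃ cm ∈ convexHull ℝ (x '' {i | y i = -1}), v = t • (cp - cm)

theorem convex_piling_unique_direction {n : ℕ} (x : Fin n → E) (y : Fin n → ℝ)
    (hy : ∀ i, y i = 1 ∨ y i = -1)
    (hpos : ∃ i, y i = 1) (hneg : ∃ i, y i = -1)
    (hind : AffineIndependent ℝ x)
    (v v' : E)
    (hv : ConvexDir x y v) (hv_pile : Piling x y v)
    (hv' : ConvexDir x y v') (hv'_pile : Piling x y v') :
    ∃ t : ℝ, t ≠ 0 ∧ v' = t • v := by
  obtain ⟨a, b, ha, hab⟩ := hv_pile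
  obtain ⟨a', b', ha', hab'⟩ := hv'_pile
  refine ⟨a' / a, div_ne_zero ha' ha, ?_⟩
  set s : ℝ := a' / a with hs
  set c : ℝ := b' - s * b with hc
  set w : E := v' - s • v with hw
  have hwx : ∀ i, ⟪w, x i⟫ = c := by
    intro i
    rw [hw, inner_sub_left, real_inner_smul_left, hab i, hab' i, hc, hs]
    field_simp
    ring
  have hconv : Convex ℝ {p : E | ⟪w, p⟫ = c} := by
    intro p hp q hq α β hα hβ hαβ
    simp only [Set.mem_setOf_eq] at *
    rw [inner_add_right, real_inner_smul_right, real_inner_smul_right, hp, hq]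
    linear_combination c * hαβ
  have hhull : ∀ z : ℝ, convexHull ℝ (x '' {i | y i = z}) ⊆ {p : E | ⟪w, p⟫ = c} := by
    intro z
    refine convexHull_min ?_ hconv
    rintro p ⟨i, -, rfl⟩
    exact hwx i
  have hzero : ∀ u : E, ConvexDir x y u → ⟪w, u⟫ = 0 := by
    rintro u ⟨t, ht, cp, hcp, cm, hcm, rfl⟩
    have h1 : ⟪w, cp⟫ = c := hhull 1 hcp
    have h2 : ⟪w, cm⟫ = c := hhull (-1) hcm
    rw [real_inner_smul_right, inner_sub_right, h1, h2]
    ring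
  have hww : ⟪w, w⟫ = 0 := by
    rw [hw]
    rw [inner_sub_right]
    rw [real_inner_smul_right, hzero v' hv', hzero v hv]
    ring
  have : w = 0 := by
    have := inner_self_eq_zero (𝕜 := ℝ) (x := w)
    exact this.mp hww
  rw [hw, sub_eq_zero] at this
  exact this
end

section
/- If v is a convex direction that gives complete data piling, then there exist s ≠ 0 and b ∈ ℝ such that the pair (s • v, b) is feasible for the hard margin SVM problem (y i * (⟪s • v, x i⟫ + b) ≥ 1 for all i) and is a hard margin solution, i.e., it minimizes ½‖w‖² over all feasible pairs (w, b). -/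
open scoped RealInnerProductSpace BigOperators

variable {E : Type*} [NormedAddCommGroup E] [InnerProductSpace ℝ E]

/-- `(w, b)` is feasible for the hard margin SVM problem. -/
def HardFeasible {n : ℕ} (x : Fin n → E) (y : Fin n → ℝ) (w : E) (b : ℝ) : Prop :=
  ∀ i, 1 ≤ y i * (⟪w, x i⟫ + b)

/-- `(w, b)` is a hard margin SVM solution: feasible and minimizes `½‖w‖²` over
all feasible pairs. -/
def HardSolution {n : ℕ} (x : Fin n → E) (y : Fin n → ℝ) (w : E) (b : ℝ) : Prop :=
  HardFeasible x y w b ∧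
    ∀ w' : E, ∀ b' : ℝ, HardFeasible x y w' b' → (1 / 2) * ‖w‖ ^ 2 ≤ (1 / 2) * ‖w'‖ ^ 2

/-!
Write `d = c₊ - c₋` and `v = t • d`. Piling normalises to `⟪a⁻¹ • v, x i⟫ - b / a = y i`,
so `w₀ = a⁻¹ • v` is feasible, and averaging over the two hulls gives `⟪w₀, d⟫ = 2`.
Every feasible `w` has `⟪w, d⟫ ≥ 2` by the same averaging, while `w₀` is a multiple of `d`,
so Cauchy–Schwarz gives `‖w₀‖ ‖d‖ = ⟪w₀, d⟫ ≤ ⟪w, d⟫ ≤ ‖w‖ ‖d‖`.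
-/

theorem le_inner_of_mem_convexHull {w : E} {S : Set E} {r : ℝ} (h : ∀ z ∈ S, r ≤ ⟪w, z⟫)
    {c : E} (hc : c ∈ convexHull ℝ S) : r ≤ ⟪w, c⟫ :=
  convexHull_min h (convex_halfSpace_ge (innerₛₗ ℝ w).isLinear r) hc

theorem inner_le_of_mem_convexHull {w : E} {S : Set E} {r : ℝ} (h : ∀ z ∈ S, ⟪w, z⟫ ≤ r)
    {c : E} (hc : c ∈ convexHull ℝ S) : ⟪w, c⟫ ≤ r :=
  convexHull_min h (convex_halfSpace_le (innerₛₗ ℝ w).isLinear r) hc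

theorem norm_smul_le_of_inner_le {d w : E} {s : ℝ} (h₀ : 0 ≤ ⟪s • d, d⟫)
    (h : ⟪s • d, d⟫ ≤ ⟪w, d⟫) : ‖s • d‖ ≤ ‖w‖ := by
  rcases eq_or_ne d 0 with rfl | hd
  · simp
  have hparallel : ‖s • d‖ * ‖d‖ = ⟪s • d, d⟫ := by
    rw [real_inner_smul_left, real_inner_self_eq_norm_sq] at h₀ ⊢
    rw [norm_smul, Real.norm_eq_abs, abs_of_nonneg (nonneg_of_mul_nonneg_left h₀ (by positivity))]
    ring
  exact le_of_mul_le_mul_right (hparallel ▸ h.trans (real_inner_le_norm w d)) (norm_pos_iff.2 hd)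

section Margin

variable {n : ℕ} {x : Fin n → E} {y : Fin n → ℝ} {cp cm : E}

theorem two_mul_le_inner_sub_of_margin {w : E} {b r : ℝ} (h : ∀ i, r ≤ y i * (⟪w, x i⟫ + b))
    (hcp : cp ∈ convexHull ℝ (x '' {i | y i = 1}))
    (hcm : cm ∈ convexHull ℝ (x '' {i | y i = -1})) : 2 * r ≤ ⟪w, cp - cm⟫ := by
  have hp : r - b ≤ ⟪w, cp⟫ := by
    refine le_inner_of_mem_convexHull ?_ hcp
    rintro _ ⟨i, hi : y i = 1, rfl⟩
    linarith [hi ▸ h i]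
  have hm : ⟪w, cm⟫ ≤ -r - b := by
    refine inner_le_of_mem_convexHull ?_ hcm
    rintro _ ⟨i, hi : y i = -1, rfl⟩
    linarith [hi ▸ h i]
  rw [inner_sub_right]
  linarith

theorem inner_sub_le_two_mul_of_margin {w : E} {b r : ℝ} (h : ∀ i, y i * (⟪w, x i⟫ + b) ≤ r)
    (hcp : cp ∈ convexHull ℝ (x '' {i | y i = 1}))
    (hcm : cm ∈ convexHull ℝ (x '' {i | y i = -1})) : ⟪w, cp - cm⟫ ≤ 2 * r := by
  have hneg : ∀ i, -r ≤ y i * (⟪-w, x i⟫ + -b) := fun i => by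
    rw [inner_neg_left]
    linarith [h i]
  have := two_mul_le_inner_sub_of_margin hneg hcp hcm
  rw [inner_neg_left] at this
  linarith

end Margin

theorem convex_piling_is_hard_margin_solution_general {n : ℕ} (x : Fin n → E) (y : Fin n → ℝ)
    (hy : ∀ i, y i = 1 ∨ y i = -1)
    (v : E) (hv : ConvexDir x y v) (hv_pile : Piling x y v) :
    ∃ s : ℝ, s ≠ 0 ∧ ∃ b : ℝ, HardSolution x y (s • v) b := by
  obtain ⟨t, -, cp, hcp, cm, hcm, rfl⟩ := hv
  obtain ⟨a, b, ha, hab⟩ := hv_pile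
  have hfit : ∀ i, ⟪a⁻¹ • t • (cp - cm), x i⟫ + -(b / a) = y i := fun i => by
    rw [real_inner_smul_left, hab i]
    field_simp
    ring
  have hsq : ∀ i, y i * y i = 1 := fun i => by rcases hy i with h | h <;> simp [h]
  have hfeas : HardFeasible x y (a⁻¹ • t • (cp - cm)) (-(b / a)) := fun i => by
    rw [hfit, hsq]
  have hupper : ⟪(a⁻¹ * t) • (cp - cm), cp - cm⟫ ≤ 2 * 1 := by
    rw [← smul_smul]
    exact inner_sub_le_two_mul_of_margin (fun i => by rw [hfit, hsq]) hcp hcm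
  have hnonneg : 0 ≤ ⟪(a⁻¹ * t) • (cp - cm), cp - cm⟫ := by
    rw [← smul_smul]
    linarith [two_mul_le_inner_sub_of_margin hfeas hcp hcm]
  refine ⟨a⁻¹, inv_ne_zero ha, -(b / a), hfeas, fun w' b' hw' => ?_⟩
  have hlower := two_mul_le_inner_sub_of_margin hw' hcp hcm
  rw [smul_smul]
  gcongr
  exact norm_smul_le_of_inner_le hnonneg (by linarith)

theorem convex_piling_is_hard_margin_solution {n : ℕ} (x : Fin n → E) (y : Fin n → ℝ)
    (hy : ∀ i, y i = 1 ∨ y i = -1)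
    (hpos : ∃ i, y i = 1) (hneg : ∃ i, y i = -1)
    (v : E) (hv : ConvexDir x y v) (hv_pile : Piling x y v) :
    ∃ s : ℝ, s ≠ 0 ∧ ∃ b : ℝ, HardSolution x y (s • v) b :=
  convex_piling_is_hard_margin_solution_general x y hy v hv hv_pile
end

section
/- Suppose the data points x₁,…,xₙ are affinely independent, (w, b) is a hard margin solution, and w gives complete data piling. Then for every vector v lying in the vectorSpan of the data that gives complete data piling (the maximal data piling direction), there exists a real t ≠ 0 with w = t • v. -/
open scoped RealInnerProductSpace BigOperators

variable {E : Type*} [NormedAddCommGroup E] [InnerProductSpace ℝ E]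

/-!
Subtracting from `w` a vector orthogonal to the vectorSpan of the data shifts every score
`⟪w, x i⟫` by the same amount, which the intercept absorbs; so the orthogonal projection of a
feasible `w` onto the vectorSpan is again feasible, with no larger norm, and a hard margin
solution must lie in the vectorSpan. If `v` and `w` pile the data with slopes `a'` and `a`, then
`⟪w - (a / a') • v, x i⟫` does not depend on `i`: this vector lies in the vectorSpan and is
orthogonal to it, hence vanishes.
-/

theorem mem_orthogonal_vectorSpan_iff {s : Set E} {u : E} :
    u ∈ (vectorSpan ℝ s)ᗮ ↔ ∀ p ∈ s, ∀ q ∈ s, ⟪u, p⟫ = ⟪u, q⟫ := by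
  rw [← Submodule.span_singleton_le_iff_mem, ← Submodule.isOrtho_iff_le, vectorSpan_def,
    Submodule.isOrtho_span]
  simp only [Set.mem_singleton_iff, forall_eq]
  refine Set.forall_mem_image2.trans ?_
  simp only [vsub_eq_sub, inner_sub_right, sub_eq_zero]

section HardMargin

variable {n : ℕ} {x : Fin n → E} {y : Fin n → ℝ}

theorem HardFeasible.sub_of_mem_orthogonal {w u : E} {b : ℝ} (h : HardFeasible x y w b)
    (hu : u ∈ (vectorSpan ℝ (Set.range x))ᗮ) (i₀ : Fin n) :
    HardFeasible x y (w - u) (b + ⟪u, x i₀⟫) := by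
  intro i
  have hconst : ⟪u, x i⟫ = ⟪u, x i₀⟫ :=
    mem_orthogonal_vectorSpan_iff.1 hu _ ⟨i, rfl⟩ _ ⟨i₀, rfl⟩
  convert h i using 2
  rw [inner_sub_left]
  linarith

theorem HardSolution.mem_vectorSpan {w : E} {b : ℝ} (h : HardSolution x y w b) (i₀ : Fin n) :
    w ∈ vectorSpan ℝ (Set.range x) := by
  set K := vectorSpan ℝ (Set.range x)
  have hfeas := h.1.sub_of_mem_orthogonal (K.sub_starProjection_mem_orthogonal w) i₀
  rw [sub_sub_cancel] at hfeas
  have hmin : ‖w‖ ^ 2 ≤ ‖K.starProjection w‖ ^ 2 := by linarith [h.2 _ _ hfeas]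
  rw [K.mem_iff_norm_starProjection]
  exact le_antisymm (K.norm_starProjection_apply_le w)
    ((pow_le_pow_iff_left₀ (norm_nonneg _) (norm_nonneg _) two_ne_zero).1 hmin)

theorem Piling.eq_smul_of_mem_vectorSpan {v w : E} (hv : Piling x y v) (hw : Piling x y w)
    (hvK : v ∈ vectorSpan ℝ (Set.range x)) (hwK : w ∈ vectorSpan ℝ (Set.range x)) :
    ∃ t : ℝ, t ≠ 0 ∧ w = t • v := by
  obtain ⟨a', c', ha', hvx⟩ := hv
  obtain ⟨a, c, ha, hwx⟩ := hw
  set K := vectorSpan ℝ (Set.range x)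
  refine ⟨a / a', div_ne_zero ha ha', ?_⟩
  have hmem : w - (a / a') • v ∈ K := K.sub_mem hwK (K.smul_mem _ hvK)
  have horth : w - (a / a') • v ∈ Kᗮ := by
    refine mem_orthogonal_vectorSpan_iff.2 ?_
    rintro _ ⟨i, rfl⟩ _ ⟨j, rfl⟩
    simp only [inner_sub_left, real_inner_smul_left, hwx, hvx]
    field_simp
    ring
  exact sub_eq_zero.1 (K.disjoint_def.1 K.orthogonal_disjoint _ hmem horth)

end HardMargin

theorem hard_margin_piling_is_mdp_general {n : ℕ} (x : Fin n → E) (y : Fin n → ℝ)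
    (hpos : ∃ i, y i = 1)
    (w : E) (b : ℝ) (hsol : HardSolution x y w b) (hpile : Piling x y w) :
    ∀ v ∈ vectorSpan ℝ (Set.range x), Piling x y v → ∃ t : ℝ, t ≠ 0 ∧ w = t • v := by
  obtain ⟨i₀, -⟩ := hpos
  intro v hv hvp
  exact hvp.eq_smul_of_mem_vectorSpan hpile hv (hsol.mem_vectorSpan i₀)

theorem hard_margin_piling_is_mdp {n : ℕ} (x : Fin n → E) (y : Fin n → ℝ)
    (hy : ∀ i, y i = 1 ∨ y i = -1)
    (hpos : ∃ i, y i = 1) (hneg : ∃ i, y i = -1)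
    (hind : AffineIndependent ℝ x)
    (w : E) (b : ℝ) (hsol : HardSolution x y w b) (hpile : Piling x y w) :
    ∀ v ∈ vectorSpan ℝ (Set.range x), Piling x y v → ∃ t : ℝ, t ≠ 0 ∧ w = t • v :=
  hard_margin_piling_is_mdp_general x y hpos w b hsol hpile
end

section
/- Suppose the data points x₁,…,xₙ are affinely independent and the data are linearly separable (a hard-margin feasible pair exists). Let (w, b) be a hard margin solution and let v be a vector lying in the vectorSpan of the data that gives complete data piling (the maximal data piling direction). Then the following are equivalent: (i) there exists t ≠ 0 with w = t • v; (ii) there exists a convex direction that gives complete data piling. Moreover, when these hold, w is itself a convex direction that gives complete data piling. -/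
/-!
The hard margin solution is always a convex direction: if `p - q` is the shortest vector between
the two class hulls, the variational inequalities at `(p, q)` make `(2 / ‖p - q‖²) • (p - q)`
feasible, while every feasible `w` has `⟪w, p - q⟫ ≥ 2`; by optimality and equality in
Cauchy–Schwarz, `w` is that multiple of `p - q`. The same argument applied to a convex piling
direction `u = s • (p - q)` shows that `w` is a multiple of `u`, so `w` piles. Finally, two piling
vectors in the vector span are proportional, since a vector of the span whose inner product with
all data points is constant is orthogonal to the span.
-/

open scoped RealInnerProductSpace BigOperators

variable {E : Type*} [NormedAddCommGroup E] [InnerProductSpace ℝ E]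

open scoped Pointwise

lemma inner_mem_of_mem_convexHull_image {ι : Type*} {x : ι → E} {A : Set ι} {T : Set ℝ}
    {u c : E} (hT : Convex ℝ T) (h : ∀ i ∈ A, ⟪u, x i⟫ ∈ T)
    (hc : c ∈ convexHull ℝ (x '' A)) : ⟪u, c⟫ ∈ T :=
  convexHull_min (s := x '' A) (t := innerₛₗ ℝ u ⁻¹' T) (Set.image_subset_iff.2 h)
    (hT.linear_preimage _) hc

lemma exists_inner_self_le_inner_of_isCompact {K : Set E} (hKc : IsCompact K)
    (hK : Convex ℝ K) (hne : K.Nonempty) : ∃ δ ∈ K, ∀ d ∈ K, ⟪δ, δ⟫ ≤ ⟪δ, d⟫ := by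
  obtain ⟨δ, hδ, hmin⟩ := hKc.exists_isMinOn hne continuous_norm.continuousOn
  have hinf : ‖0 - δ‖ = ⨅ d : K, ‖0 - (d : E)‖ := by
    simpa only [zero_sub, norm_neg] using ((IsMinOn.iInf_eq hδ hmin).symm)
  refine ⟨δ, hδ, fun d hd => ?_⟩
  have := (norm_eq_iInf_iff_real_inner_le_zero hK hδ).1 hinf d hd
  rw [zero_sub, inner_neg_left, inner_sub_right] at this
  linarith

lemma eq_smul_of_norm_mul_le_inner {w δ : E} {r : ℝ} (hδ : δ ≠ 0) (hle : ‖w‖ * ‖δ‖ ≤ r)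
    (hge : r ≤ ⟪w, δ⟫) : w = (r / ‖δ‖ ^ 2) • δ := by
  have hδn : ‖δ‖ ≠ 0 := norm_ne_zero_iff.2 hδ
  have hr : r = ‖w‖ * ‖δ‖ := le_antisymm (hge.trans (real_inner_le_norm w δ)) hle
  have hcs : ‖δ‖ • w = ‖w‖ • δ :=
    inner_eq_norm_mul_iff_real.1 (le_antisymm (real_inner_le_norm w δ) (hle.trans hge))
  calc w = ‖δ‖⁻¹ • ‖δ‖ • w := (inv_smul_smul₀ hδn w).symm
    _ = (r / ‖δ‖ ^ 2) • δ := by rw [hcs, smul_smul, hr]; field_simp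

section LabeledData

variable {n : ℕ} {x : Fin n → E} {y : Fin n → ℝ}

lemma Piling.smul {v : E} (h : Piling x y v) {t : ℝ} (ht : t ≠ 0) : Piling x y (t • v) := by
  obtain ⟨a, b, ha, h⟩ := h
  exact ⟨t * a, t * b, mul_ne_zero ht ha, fun i => by rw [real_inner_smul_left, h]; ring⟩

lemma ConvexDir.mem_vectorSpan {u : E} (h : ConvexDir x y u) :
    u ∈ vectorSpan ℝ (Set.range x) := by
  obtain ⟨t, -, p, hp, q, hq, rfl⟩ := h
  have hspan : ∀ {A : Set (Fin n)} {c : E}, c ∈ convexHull ℝ (x '' A) →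
      c ∈ affineSpan ℝ (Set.range x) := fun hc =>
    affineSpan_mono ℝ (Set.image_subset_range _ _) (convexHull_subset_affineSpan _ hc)
  exact Submodule.smul_mem _ t
    (vsub_mem_vectorSpan_of_mem_affineSpan_of_mem_affineSpan (hspan hp) (hspan hq))

lemma eq_zero_of_mem_vectorSpan_of_inner_eq {z : E} (hz : z ∈ vectorSpan ℝ (Set.range x))
    {c : ℝ} (h : ∀ i, ⟪z, x i⟫ = c) : z = 0 := by
  have hker : vectorSpan ℝ (Set.range x) ≤ LinearMap.ker (innerₛₗ ℝ z) := by
    rw [vectorSpan_def, Submodule.span_le]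
    rintro _ ⟨_, ⟨i, rfl⟩, _, ⟨j, rfl⟩, rfl⟩
    simp [inner_sub_right, h]
  exact inner_self_eq_zero.1 (hker hz)

lemma Piling.exists_eq_smul {u v : E} (hu : Piling x y u) (hv : Piling x y v)
    (hu_span : u ∈ vectorSpan ℝ (Set.range x)) (hv_span : v ∈ vectorSpan ℝ (Set.range x)) :
    ∃ t : ℝ, t ≠ 0 ∧ u = t • v := by
  obtain ⟨a₁, b₁, ha₁, hu⟩ := hu
  obtain ⟨a₂, b₂, ha₂, hv⟩ := hv
  refine ⟨a₁ / a₂, div_ne_zero ha₁ ha₂, sub_eq_zero.1 ?_⟩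
  refine eq_zero_of_mem_vectorSpan_of_inner_eq (c := b₁ - a₁ / a₂ * b₂)
    (sub_mem hu_span (Submodule.smul_mem _ _ hv_span)) fun i => ?_
  rw [inner_sub_left, real_inner_smul_left, hu, hv, mul_add, ← mul_assoc, div_mul_cancel₀ a₁ ha₂]
  ring

variable {w : E} {b : ℝ} {p q : E}

lemma HardFeasible.two_le_inner_sub (hw : HardFeasible x y w b)
    (hp : p ∈ convexHull ℝ (x '' {i | y i = 1})) (hq : q ∈ convexHull ℝ (x '' {i | y i = -1})) :
    2 ≤ ⟪w, p - q⟫ := by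
  have h_pos : ⟪w, p⟫ ∈ Set.Ici (1 - b) :=
    inner_mem_of_mem_convexHull_image (convex_Ici _) (fun i (hi : y i = 1) => by
      have := hw i; rw [hi] at this; rw [Set.mem_Ici]; linarith) hp
  have h_neg : ⟪w, q⟫ ∈ Set.Iic (-1 - b) :=
    inner_mem_of_mem_convexHull_image (convex_Iic _) (fun i (hi : y i = -1) => by
      have := hw i; rw [hi] at this; rw [Set.mem_Iic]; linarith) hq
  rw [inner_sub_right]
  linarith [Set.mem_Ici.1 h_pos, Set.mem_Iic.1 h_neg]

lemma hardFeasible_smul_sub (hy : ∀ i, y i = 1 ∨ y i = -1) (hpq : p ≠ q)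
    (h_pos : ∀ i, y i = 1 → ⟪p - q, p⟫ ≤ ⟪p - q, x i⟫)
    (h_neg : ∀ i, y i = -1 → ⟪p - q, x i⟫ ≤ ⟪p - q, q⟫) :
    HardFeasible x y ((2 / ‖p - q‖ ^ 2) • (p - q))
      (-(⟪p - q, p⟫ + ⟪p - q, q⟫) / ‖p - q‖ ^ 2) := by
  have hN : ‖p - q‖ ^ 2 = ⟪p - q, p⟫ - ⟪p - q, q⟫ := by
    rw [← real_inner_self_eq_norm_sq, inner_sub_right]
  have hNpos : 0 < ‖p - q‖ ^ 2 := by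
    have := norm_pos_iff.2 (sub_ne_zero.2 hpq); positivity
  intro i
  have key : y i * (2 / ‖p - q‖ ^ 2 * ⟪p - q, x i⟫ + -(⟪p - q, p⟫ + ⟪p - q, q⟫) / ‖p - q‖ ^ 2)
      = y i * (2 * ⟪p - q, x i⟫ - (⟪p - q, p⟫ + ⟪p - q, q⟫)) / ‖p - q‖ ^ 2 := by ring
  rw [real_inner_smul_left, key, le_div_iff₀ hNpos, one_mul]
  rcases hy i with hi | hi
  · rw [hi]; linarith [h_pos i hi]
  · rw [hi]; linarith [h_neg i hi]

lemma HardSolution.eq_smul_sub (hsol : HardSolution x y w b)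
    (hp : p ∈ convexHull ℝ (x '' {i | y i = 1})) (hq : q ∈ convexHull ℝ (x '' {i | y i = -1}))
    {b' : ℝ} (hfeas : HardFeasible x y ((2 / ‖p - q‖ ^ 2) • (p - q)) b') :
    w = (2 / ‖p - q‖ ^ 2) • (p - q) := by
  have hinner := hsol.1.two_le_inner_sub hp hq
  have hpq : p - q ≠ 0 := by
    rintro h; rw [h, inner_zero_right] at hinner; norm_num at hinner
  have hδ : 0 < ‖p - q‖ := norm_pos_iff.2 hpq
  have hcand : ‖(2 / ‖p - q‖ ^ 2) • (p - q)‖ = 2 / ‖p - q‖ := by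
    rw [norm_smul, Real.norm_of_nonneg (by positivity)]
    field_simp
  have hopt : ‖w‖ ^ 2 ≤ (2 / ‖p - q‖) ^ 2 := by
    have := hsol.2 _ _ hfeas
    rw [hcand] at this
    linarith
  have hle : ‖w‖ * ‖p - q‖ ≤ 2 :=
    (le_div_iff₀ hδ).1 ((pow_le_pow_iff_left₀ (norm_nonneg w) (by positivity) two_ne_zero).1 hopt)
  exact eq_smul_of_norm_mul_le_inner hpq hle hinner

/-- The pair `(a⁻¹ • (p - q), -β / a)` puts every point exactly on its margin, and
`‖p - q‖² = 2 a` identifies it with the candidate of `eq_smul_sub`. -/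
lemma HardSolution.eq_inv_smul_sub_of_piling (hy : ∀ i, y i = 1 ∨ y i = -1)
    (hsol : HardSolution x y w b)
    (hp : p ∈ convexHull ℝ (x '' {i | y i = 1})) (hq : q ∈ convexHull ℝ (x '' {i | y i = -1}))
    {a β : ℝ} (ha : a ≠ 0) (hpile : ∀ i, ⟪p - q, x i⟫ = a * y i + β) :
    w = a⁻¹ • (p - q) := by
  have hp' : ⟪p - q, p⟫ ∈ ({a + β} : Set ℝ) := inner_mem_of_mem_convexHull_image
    (convex_singleton _) (fun i (hi : y i = 1) => by rw [hpile, hi, mul_one]; rfl) hp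
  have hq' : ⟪p - q, q⟫ ∈ ({-a + β} : Set ℝ) := inner_mem_of_mem_convexHull_image
    (convex_singleton _) (fun i (hi : y i = -1) => by rw [hpile, hi, mul_neg_one]; rfl) hq
  have hcoef : 2 / ‖p - q‖ ^ 2 = a⁻¹ := by
    rw [← real_inner_self_eq_norm_sq, inner_sub_right, Set.mem_singleton_iff.1 hp',
      Set.mem_singleton_iff.1 hq', show a + β - (-a + β) = 2 * a by ring]
    field_simp
  have hfeas : HardFeasible x y ((2 / ‖p - q‖ ^ 2) • (p - q)) (-β / a) := by
    intro i
    have hmargin : a⁻¹ * (a * y i + β) + -β / a = y i := by field_simp; ring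
    rw [hcoef, real_inner_smul_left, hpile, hmargin]
    rcases hy i with hi | hi <;> rw [hi] <;> norm_num
  rw [hsol.eq_smul_sub hp hq hfeas, hcoef]

lemma HardSolution.piling_of_convexDir (hy : ∀ i, y i = 1 ∨ y i = -1)
    (hsol : HardSolution x y w b) {u : E} (hu : ConvexDir x y u) (hu_pile : Piling x y u) :
    Piling x y w := by
  obtain ⟨s, hs, p, hp, q, hq, rfl⟩ := hu
  have hpq_pile := hu_pile.smul (inv_ne_zero hs)
  rw [inv_smul_smul₀ hs] at hpq_pile
  obtain ⟨a, β, ha, hpile⟩ := hpq_pile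
  rw [hsol.eq_inv_smul_sub_of_piling hy hp hq ha hpile]
  exact Piling.smul ⟨a, β, ha, hpile⟩ (inv_ne_zero ha)

lemma HardSolution.convexDir (hy : ∀ i, y i = 1 ∨ y i = -1) (hpos : ∃ i, y i = 1)
    (hneg : ∃ i, y i = -1) (hsol : HardSolution x y w b) : ConvexDir x y w := by
  obtain ⟨i_pos, hi_pos⟩ := hpos
  obtain ⟨i_neg, hi_neg⟩ := hneg
  have hK_compact :
      IsCompact (convexHull ℝ (x '' {i | y i = 1}) - convexHull ℝ (x '' {i | y i = -1})) := by
    rw [← convexHull_sub]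
    exact ((Set.toFinite _).sub (Set.toFinite _)).isCompact_convexHull ℝ
  have hx_mem : ∀ {c : ℝ} (i : Fin n), y i = c → x i ∈ convexHull ℝ (x '' {j | y j = c}) :=
    fun i hi => subset_convexHull ℝ _ ⟨i, hi, rfl⟩
  obtain ⟨_, ⟨p, hp, q, hq, rfl⟩, hmin⟩ := exists_inner_self_le_inner_of_isCompact
    hK_compact ((convex_convexHull ℝ _).sub (convex_convexHull ℝ _))
    (Set.Nonempty.sub ⟨_, hx_mem i_pos hi_pos⟩ ⟨_, hx_mem i_neg hi_neg⟩)
  have h_pos : ∀ i, y i = 1 → ⟪p - q, p⟫ ≤ ⟪p - q, x i⟫ := fun i hi => by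
    have := hmin _ (Set.sub_mem_sub (hx_mem i hi) hq)
    rw [inner_sub_right, inner_sub_right] at this; linarith
  have h_neg : ∀ i, y i = -1 → ⟪p - q, x i⟫ ≤ ⟪p - q, q⟫ := fun i hi => by
    have := hmin _ (Set.sub_mem_sub hp (hx_mem i hi))
    rw [inner_sub_right, inner_sub_right] at this; linarith
  have hpq : p ≠ q := by
    rintro rfl
    have := hsol.1.two_le_inner_sub hp hq
    rw [sub_self, inner_zero_right] at this; norm_num at this
  have hδ := norm_pos_iff.2 (sub_ne_zero.2 hpq)
  exact ⟨2 / ‖p - q‖ ^ 2, by positivity, p, hp, q, hq,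
    hsol.eq_smul_sub hp hq (hardFeasible_smul_sub hy hpq h_pos h_neg)⟩

end LabeledData

theorem hard_margin_eq_mdp_iff_general {n : ℕ} (x : Fin n → E) (y : Fin n → ℝ)
    (hy : ∀ i, y i = 1 ∨ y i = -1)
    (hpos : ∃ i, y i = 1) (hneg : ∃ i, y i = -1)
    (w : E) (b : ℝ) (hsol : HardSolution x y w b)
    (v : E) (hv_span : v ∈ vectorSpan ℝ (Set.range x)) (hv_pile : Piling x y v) :
    ((∃ t : ℝ, t ≠ 0 ∧ w = t • v) ↔ ∃ u : E, ConvexDir x y u ∧ Piling x y u) ∧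
      ((∃ t : ℝ, t ≠ 0 ∧ w = t • v) → ConvexDir x y w ∧ Piling x y w) := by
  have hw_dir : ConvexDir x y w := hsol.convexDir hy hpos hneg
  have hfwd : (∃ t : ℝ, t ≠ 0 ∧ w = t • v) → ConvexDir x y w ∧ Piling x y w := by
    rintro ⟨t, ht, rfl⟩
    exact ⟨hw_dir, hv_pile.smul ht⟩
  refine ⟨⟨fun h => ⟨w, hfwd h⟩, fun ⟨u, hu_dir, hu_pile⟩ => ?_⟩, hfwd⟩
  exact (hsol.piling_of_convexDir hy hu_dir hu_pile).exists_eq_smul hv_pile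
    hw_dir.mem_vectorSpan hv_span

theorem hard_margin_eq_mdp_iff {n : ℕ} (x : Fin n → E) (y : Fin n → ℝ)
    (hy : ∀ i, y i = 1 ∨ y i = -1)
    (hpos : ∃ i, y i = 1) (hneg : ∃ i, y i = -1)
    (hind : AffineIndependent ℝ x)
    (hsep : ∃ w₀ : E, ∃ b₀ : ℝ, HardFeasible x y w₀ b₀)
    (w : E) (b : ℝ) (hsol : HardSolution x y w b)
    (v : E) (hv_span : v ∈ vectorSpan ℝ (Set.range x)) (hv_pile : Piling x y v) :
    ((∃ t : ℝ, t ≠ 0 ∧ w = t • v) ↔ ∃ u : E, ConvexDir x y u ∧ Piling x y u) ∧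
      ((∃ t : ℝ, t ≠ 0 ∧ w = t • v) → ConvexDir x y w ∧ Piling x y w) :=
  hard_margin_eq_mdp_iff_general x y hy hpos hneg w b hsol v hv_span hv_pile
end

section
/- Suppose the data points x₁,…,xₙ are affinely independent and the data are linearly separable (a hard-margin feasible pair exists). Let (w, b) be a hard margin solution, let v be a vector lying in the vectorSpan of the data that gives complete data piling (the maximal data piling direction), and let m = x̄₊ − x̄₋ be the mean difference, where x̄₊ and x̄₋ are the means of the positive and negative classes. Then w is proportional to m (∃ t ≠ 0, w = t • m) if and only if m is proportional to v (∃ t ≠ 0, m = t • v). -/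
open scoped RealInnerProductSpace BigOperators

variable {E : Type*} [NormedAddCommGroup E] [InnerProductSpace ℝ E]

open Classical in
/-- The index set of the positive class. -/
noncomputable def posSet {n : ℕ} (y : Fin n → ℝ) : Finset (Fin n) :=
  Finset.univ.filter (fun i => y i = 1)

open Classical in
/-- The index set of the negative class. -/
noncomputable def negSet {n : ℕ} (y : Fin n → ℝ) : Finset (Fin n) :=
  Finset.univ.filter (fun i => y i = -1)

/-- The mean difference direction `x̄₊ - x̄₋`. -/
noncomputable def meanDiff {n : ℕ} (x : Fin n → E) (y : Fin n → ℝ) : E :=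
  (((posSet y).card : ℝ)⁻¹ • ∑ i ∈ posSet y, x i) -
    (((negSet y).card : ℝ)⁻¹ • ∑ i ∈ negSet y, x i)

/-!
Averaging the margin constraints over each class shows that every feasible `w'` satisfies
`2 ≤ ⟪w', m⟫` for the mean difference `m`. If `m` is a piling direction, a rescaling of `m` is
feasible and attains this bound, so it is the hard margin solution. Conversely, if `w = t • m`,
no constraint `j` can be slack: by affine independence some `u` has constant inner product with
every data point except `x j`, so moving `w` along `±u` keeps it feasible and, by minimality, forces
`⟪w, u⟫ = 0`, whereas `⟪m, u⟫ ≠ 0`. With all constraints tight `m` piles, and two piling directions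
in the vector span of the data are proportional because a suitable combination of them is
orthogonal to the data differences spanning it.
-/

open Filter Topology Finset

theorem LinearIndependent.exists_inner_eq {ι : Type*} [Finite ι] {v : ι → E}
    (hv : LinearIndependent ℝ v) (c : ι → ℝ) : ∃ u : E, ∀ i, ⟪u, v i⟫ = c i := by
  let W := Submodule.span ℝ (Set.range v)
  have : FiniteDimensional ℝ W := FiniteDimensional.span_of_finite ℝ (Set.finite_range v)
  let f : StrongDual ℝ W := LinearMap.toContinuousLinearMap ((Module.Basis.span hv).constr ℝ c)
  refine ⟨(InnerProductSpace.toDual ℝ W).symm f, fun i => ?_⟩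
  calc ⟪((InnerProductSpace.toDual ℝ W).symm f : E), v i⟫
      = ⟪(InnerProductSpace.toDual ℝ W).symm f, Module.Basis.span hv i⟫ := by
        rw [Submodule.coe_inner, Module.Basis.span_apply]
    _ = c i := by
      rw [InnerProductSpace.toDual_symm_apply]
      exact (Module.Basis.span hv).constr_basis ℝ c i

theorem AffineIndependent.exists_inner_eq_add_const {ι : Type*} [Finite ι] {p : ι → E}
    (hp : AffineIndependent ℝ p) (c : ι → ℝ) : ∃ (u : E) (C : ℝ), ∀ i, ⟪u, p i⟫ = c i + C := by
  rcases isEmpty_or_nonempty ι with hι | ⟨⟨k⟩⟩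
  · exact ⟨0, 0, fun i => isEmptyElim i⟩
  have hli := (affineIndependent_iff_linearIndependent_vsub ℝ p k).mp hp
  obtain ⟨u, hu⟩ := hli.exists_inner_eq fun i => c i - c k
  refine ⟨u, ⟪u, p k⟫ - c k, fun i => ?_⟩
  rcases eq_or_ne i k with rfl | hik
  · ring
  · have := hu ⟨i, hik⟩
    rw [vsub_eq_sub, inner_sub_right] at this
    linarith

theorem eq_zero_of_mem_vectorSpan_of_inner_eq_s6 {ι : Type*} {p : ι → E} {u : E}
    (hu : u ∈ vectorSpan ℝ (Set.range p)) (h : ∀ i j, ⟪u, p i⟫ = ⟪u, p j⟫) : u = 0 := by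
  have hperp : vectorSpan ℝ (Set.range p) ≤ (ℝ ∙ u)ᗮ := by
    rw [vectorSpan_def, Submodule.span_le]
    rintro _ ⟨_, ⟨i, rfl⟩, _, ⟨j, rfl⟩, rfl⟩
    rw [SetLike.mem_coe, Submodule.mem_orthogonal_singleton_iff_inner_right]
    simp only [vsub_eq_sub, inner_sub_right, h i j, sub_self]
  simpa using Submodule.mem_orthogonal_singleton_iff_inner_right.mp (hperp hu)

theorem eq_smul_of_mem_vectorSpan_of_inner_eq {ι : Type*} {p : ι → E} {y : ι → ℝ} {u v : E}
    {A B a c : ℝ} (hu : u ∈ vectorSpan ℝ (Set.range p)) (hv : v ∈ vectorSpan ℝ (Set.range p))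
    (hup : ∀ i, ⟪u, p i⟫ = A * y i + B) (hvp : ∀ i, ⟪v, p i⟫ = a * y i + c) (ha : a ≠ 0) :
    u = (A / a) • v := by
  refine sub_eq_zero.mp (eq_zero_of_mem_vectorSpan_of_inner_eq_s6
    (Submodule.sub_mem _ hu (Submodule.smul_mem _ _ hv)) fun i j => ?_)
  simp only [inner_sub_left, real_inner_smul_left, hup, hvp]
  field_simp
  ring

theorem eq_of_norm_le_of_norm_sq_le_inner {w w₀ : E} (hle : ‖w‖ ≤ ‖w₀‖)
    (hinner : ‖w₀‖ ^ 2 ≤ ⟪w, w₀⟫) : w = w₀ := by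
  have : ‖w - w₀‖ ^ 2 ≤ 0 := by
    rw [norm_sub_sq_real]
    nlinarith [norm_nonneg w]
  simpa [sub_eq_zero] using this

variable {n : ℕ} {x : Fin n → E} {y : Fin n → ℝ}

@[simp]
theorem mem_posSet {i : Fin n} : i ∈ posSet y ↔ y i = 1 := by simp [posSet]

@[simp]
theorem mem_negSet {i : Fin n} : i ∈ negSet y ↔ y i = -1 := by simp [negSet]

theorem inner_meanDiff (u : E) :
    ⟪u, meanDiff x y⟫ = 𝔼 i ∈ posSet y, ⟪u, x i⟫ - 𝔼 i ∈ negSet y, ⟪u, x i⟫ := by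
  simp only [meanDiff, inner_sub_right, real_inner_smul_right, inner_sum,
    expect_eq_sum_div_card, inv_mul_eq_div]

theorem centroid_eq_inv_card_smul_sum {ι : Type*} {s : Finset ι} (hs : s.Nonempty) (p : ι → E) :
    s.centroid ℝ p = (#s : ℝ)⁻¹ • ∑ i ∈ s, p i := by
  rw [centroid_def, affineCombination_eq_linear_combination _ _ _
    (s.sum_centroidWeights_eq_one_of_nonempty ℝ hs), smul_sum]
  rfl

theorem posSet_nonempty (hpos : ∃ i, y i = 1) : (posSet y).Nonempty :=
  let ⟨i, hi⟩ := hpos; ⟨i, mem_posSet.mpr hi⟩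

theorem negSet_nonempty (hneg : ∃ i, y i = -1) : (negSet y).Nonempty :=
  let ⟨i, hi⟩ := hneg; ⟨i, mem_negSet.mpr hi⟩

theorem meanDiff_mem_vectorSpan (hpos : ∃ i, y i = 1) (hneg : ∃ i, y i = -1) :
    meanDiff x y ∈ vectorSpan ℝ (Set.range x) := by
  have hP := centroid_mem_affineSpan_of_nonempty ℝ x (posSet_nonempty hpos)
  have hN := centroid_mem_affineSpan_of_nonempty ℝ x (negSet_nonempty hneg)
  rw [← direction_affineSpan, meanDiff, ← centroid_eq_inv_card_smul_sum (posSet_nonempty hpos),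
    ← centroid_eq_inv_card_smul_sum (negSet_nonempty hneg), ← vsub_eq_sub]
  exact AffineSubspace.vsub_mem_direction hP hN

theorem two_le_inner_meanDiff (hpos : ∃ i, y i = 1) (hneg : ∃ i, y i = -1) {w : E} {b : ℝ}
    (hf : HardFeasible x y w b) : 2 ≤ ⟪w, meanDiff x y⟫ := by
  have hP : 1 - b ≤ 𝔼 i ∈ posSet y, ⟪w, x i⟫ := le_expect (posSet_nonempty hpos) fun i hi => by
    have := hf i
    rw [mem_posSet.mp hi] at this
    linarith
  have hN : 𝔼 i ∈ negSet y, ⟪w, x i⟫ ≤ -1 - b := expect_le (negSet_nonempty hneg) fun i hi => by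
    have := hf i
    rw [mem_negSet.mp hi] at this
    linarith
  rw [inner_meanDiff]
  linarith

theorem inner_meanDiff_of_inner_eq (hpos : ∃ i, y i = 1) (hneg : ∃ i, y i = -1) {u : E} {A C : ℝ}
    (hu : ∀ i, ⟪u, x i⟫ = A * y i + C) : ⟪u, meanDiff x y⟫ = 2 * A := by
  have hP : 𝔼 i ∈ posSet y, ⟪u, x i⟫ = A + C := by
    rw [expect_congr rfl fun i hi => by rw [hu, mem_posSet.mp hi, mul_one],
      expect_const (posSet_nonempty hpos)]
  have hN : 𝔼 i ∈ negSet y, ⟪u, x i⟫ = -A + C := by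
    rw [expect_congr rfl fun i hi => by rw [hu, mem_negSet.mp hi, mul_neg_one],
      expect_const (negSet_nonempty hneg)]
  rw [inner_meanDiff, hP, hN]
  ring

theorem inner_meanDiff_ne_zero_of_inner_eq (hy : ∀ i, y i = 1 ∨ y i = -1)
    (hpos : ∃ i, y i = 1) (hneg : ∃ i, y i = -1) {j : Fin n} {u : E} {C : ℝ}
    (hu : ∀ i, ⟪u, x i⟫ = (Pi.single j 1 : Fin n → ℝ) i + C) : ⟪u, meanDiff x y⟫ ≠ 0 := by
  simp only [inner_meanDiff, hu, expect_add_distrib, expect_const (posSet_nonempty hpos),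
    expect_const (negSet_nonempty hneg), Pi.single_apply]
  rcases hy j with h | h <;> norm_num [h, (posSet_nonempty hpos).card_ne_zero,
    (negSet_nonempty hneg).card_ne_zero]

theorem hardFeasible_inv_smul_of_inner_eq (hy : ∀ i, y i = 1 ∨ y i = -1) {u : E} {A C : ℝ}
    (hA : A ≠ 0) (hu : ∀ i, ⟪u, x i⟫ = A * y i + C) : HardFeasible x y (A⁻¹ • u) (-(C / A)) := by
  intro i
  have : ⟪A⁻¹ • u, x i⟫ + -(C / A) = y i := by
    rw [real_inner_smul_left, hu]
    field_simp
    ring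
  rw [this]
  rcases hy i with h | h <;> norm_num [h]

namespace HardSolution

variable {w : E} {b : ℝ}

theorem norm_le (hsol : HardSolution x y w b) {w' : E} {b' : ℝ} (hf : HardFeasible x y w' b') :
    ‖w‖ ≤ ‖w'‖ :=
  (sq_le_sq₀ (norm_nonneg _) (norm_nonneg _)).mp (by linarith [hsol.2 w' b' hf])

theorem inner_nonpos_of_slack (hsol : HardSolution x y w b) {j : Fin n}
    (hj : 1 < y j * (⟪w, x j⟫ + b)) {u : E} {C : ℝ} (hu : ∀ i ≠ j, ⟪u, x i⟫ = C) :
    ⟪w, u⟫ ≤ 0 := by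
  by_contra! hwu
  have hslack : ∀ᶠ ε in 𝓝 (0 : ℝ), 1 < y j * (⟪w - ε • u, x j⟫ + (b + ε * C)) :=
    continuousAt_const.eventually_lt (by fun_prop) (by simpa using hj)
  have hdescent : ∀ᶠ ε in 𝓝 (0 : ℝ), ε * ‖u‖ ^ 2 < 2 * ⟪w, u⟫ :=
    (by fun_prop : ContinuousAt (fun ε : ℝ => ε * ‖u‖ ^ 2) 0).eventually_lt continuousAt_const
      (by simpa using hwu)
  obtain ⟨ε, ⟨hεj, hεu⟩, hε⟩ :=
    (((hslack.and hdescent).filter_mono nhdsWithin_le_nhds).and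
      (self_mem_nhdsWithin : Set.Ioi (0 : ℝ) ∈ 𝓝[>] 0)).exists
  -- only the `j`-th constraint moves, and it has slack to spare
  have hfeas : HardFeasible x y (w - ε • u) (b + ε * C) := by
    intro i
    rcases eq_or_ne i j with rfl | hi
    · exact hεj.le
    · rw [inner_sub_left, real_inner_smul_left, hu i hi]
      convert hsol.1 i using 2
      ring
  have hnorm : ‖w - ε • u‖ ^ 2 = ‖w‖ ^ 2 - ε * (2 * ⟪w, u⟫ - ε * ‖u‖ ^ 2) := by
    rw [norm_sub_sq_real, real_inner_smul_right, norm_smul, mul_pow, Real.norm_eq_abs, sq_abs]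
    ring
  have hle : ‖w‖ ^ 2 ≤ ‖w - ε • u‖ ^ 2 := by gcongr; exact hsol.norm_le hfeas
  nlinarith [mul_pos (Set.mem_Ioi.mp hε) (sub_pos.mpr hεu)]

theorem inner_eq_zero_of_slack (hsol : HardSolution x y w b) {j : Fin n}
    (hj : 1 < y j * (⟪w, x j⟫ + b)) {u : E} {C : ℝ} (hu : ∀ i ≠ j, ⟪u, x i⟫ = C) :
    ⟪w, u⟫ = 0 := by
  have := hsol.inner_nonpos_of_slack hj (u := -u) (C := -C) fun i hi => by
    rw [inner_neg_left, hu i hi]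
  rw [inner_neg_right] at this
  linarith [hsol.inner_nonpos_of_slack hj hu]

theorem tight_of_eq_smul_meanDiff (hy : ∀ i, y i = 1 ∨ y i = -1) (hpos : ∃ i, y i = 1)
    (hneg : ∃ i, y i = -1) (hind : AffineIndependent ℝ x) (hsol : HardSolution x y w b) {t : ℝ}
    (ht : t ≠ 0) (hw : w = t • meanDiff x y) (i : Fin n) : y i * (⟪w, x i⟫ + b) = 1 := by
  by_contra hi
  obtain ⟨u, C, hu⟩ := hind.exists_inner_eq_add_const (Pi.single i 1)
  have hwu := hsol.inner_eq_zero_of_slack (lt_of_le_of_ne (hsol.1 i) (Ne.symm hi)) (u := u)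
    (C := C) fun k hk => by rw [hu, Pi.single_eq_of_ne hk, zero_add]
  rw [hw, real_inner_smul_left, real_inner_comm] at hwu
  exact inner_meanDiff_ne_zero_of_inner_eq hy hpos hneg hu
    ((mul_eq_zero.mp hwu).resolve_left ht)

theorem eq_inv_smul_meanDiff (hy : ∀ i, y i = 1 ∨ y i = -1) (hpos : ∃ i, y i = 1)
    (hneg : ∃ i, y i = -1) (hsol : HardSolution x y w b) {A C : ℝ} (hA : A ≠ 0)
    (hm : ∀ i, ⟪meanDiff x y, x i⟫ = A * y i + C) : w = A⁻¹ • meanDiff x y := by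
  have hmm : ‖meanDiff x y‖ ^ 2 = 2 * A := by
    rw [← real_inner_self_eq_norm_sq, inner_meanDiff_of_inner_eq hpos hneg hm]
  have hA0 : 0 < A := lt_of_le_of_ne (by linarith [sq_nonneg ‖meanDiff x y‖]) hA.symm
  refine eq_of_norm_le_of_norm_sq_le_inner
    (hsol.norm_le (hardFeasible_inv_smul_of_inner_eq hy hA hm)) ?_
  rw [norm_smul, mul_pow, hmm, real_inner_smul_right, norm_inv, Real.norm_eq_abs,
    abs_of_pos hA0]
  have := two_le_inner_meanDiff hpos hneg hsol.1
  field_simp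
  linarith

end HardSolution

theorem hard_margin_eq_md_iff_md_eq_mdp_general {n : ℕ} (x : Fin n → E) (y : Fin n → ℝ)
    (hy : ∀ i, y i = 1 ∨ y i = -1)
    (hpos : ∃ i, y i = 1) (hneg : ∃ i, y i = -1)
    (hind : AffineIndependent ℝ x)
    (w : E) (b : ℝ) (hsol : HardSolution x y w b)
    (v : E) (hv_span : v ∈ vectorSpan ℝ (Set.range x)) (hv_pile : Piling x y v) :
    (∃ t : ℝ, t ≠ 0 ∧ w = t • meanDiff x y) ↔
      ∃ t : ℝ, t ≠ 0 ∧ meanDiff x y = t • v := by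
  obtain ⟨a, c, ha, hv⟩ := hv_pile
  constructor
  · rintro ⟨t, ht, hw⟩
    have hm : ∀ i, ⟪meanDiff x y, x i⟫ = t⁻¹ * y i + -(t⁻¹ * b) := fun i => by
      have := hsol.tight_of_eq_smul_meanDiff hy hpos hneg hind ht hw i
      rw [hw, real_inner_smul_left] at this
      field_simp
      rcases hy i with h | h <;> rw [h] at this ⊢ <;> linarith
    exact ⟨t⁻¹ / a, div_ne_zero (inv_ne_zero ht) ha,
      eq_smul_of_mem_vectorSpan_of_inner_eq (meanDiff_mem_vectorSpan hpos hneg) hv_span hm hv ha⟩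
  · rintro ⟨t, ht, hmv⟩
    have hm : ∀ i, ⟪meanDiff x y, x i⟫ = t * a * y i + t * c := fun i => by
      rw [hmv, real_inner_smul_left, hv]
      ring
    exact ⟨(t * a)⁻¹, inv_ne_zero (mul_ne_zero ht ha),
      hsol.eq_inv_smul_meanDiff hy hpos hneg (mul_ne_zero ht ha) hm⟩

theorem hard_margin_eq_md_iff_md_eq_mdp {n : ℕ} (x : Fin n → E) (y : Fin n → ℝ)
    (hy : ∀ i, y i = 1 ∨ y i = -1)
    (hpos : ∃ i, y i = 1) (hneg : ∃ i, y i = -1)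
    (hind : AffineIndependent ℝ x)
    (hsep : ∃ w₀ : E, ∃ b₀ : ℝ, HardFeasible x y w₀ b₀)
    (w : E) (b : ℝ) (hsol : HardSolution x y w b)
    (v : E) (hv_span : v ∈ vectorSpan ℝ (Set.range x)) (hv_pile : Piling x y v) :
    (∃ t : ℝ, t ≠ 0 ∧ w = t • meanDiff x y) ↔
      ∃ t : ℝ, t ≠ 0 ∧ meanDiff x y = t • v :=
  hard_margin_eq_md_iff_md_eq_mdp_general x y hy hpos hneg hind w b hsol v hv_span hv_pile
end

section
/- Let (w, b) be a hard margin solution with w ≠ 0, and let α : Fin n → ℝ satisfy the hard margin KKT conditions for (w, b). Let V = {i : α i ≠ 0} be the set of support vector indices. Then: (i) w lies in vectorSpan ℝ {x i : i ∈ V}; (ii) y i * (⟪w, x i⟫ + b) = 1 for every i ∈ V (so w gives complete data piling for the subfamily {(x i, y i)}_{i∈V} with a = 1); and (iii) if the points {x i}_{i∈V} are affinely independent, then any vector u ∈ vectorSpan ℝ {x i : i ∈ V} giving complete data piling for the subfamily {(x i, y i)}_{i∈V} satisfies u = t • w for some t ≠ 0. In other words, hard margin SVM is the maximal data piling direction of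 its support vectors. -/
open scoped RealInnerProductSpace BigOperators

variable {E : Type*} [NormedAddCommGroup E] [InnerProductSpace ℝ E]

/-- A vector `v` gives complete data piling for the subfamily of the labeled data
indexed by `V`. -/
def PilingOn {n : ℕ} (x : Fin n → E) (y : Fin n → ℝ) (V : Set (Fin n)) (v : E) : Prop :=
  ∃ a b : ℝ, a ≠ 0 ∧ ∀ i ∈ V, ⟪v, x i⟫ = a * y i + b

/-- The hard margin KKT conditions for `(w, b)` with multipliers `α`. -/
def HardKKT {n : ℕ} (x : Fin n → E) (y : Fin n → ℝ) (w : E) (b : ℝ) (α : Fin n → ℝ) : Prop :=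
  (∀ i, 0 ≤ α i) ∧
  w = ∑ i, (α i * y i) • x i ∧
  (∑ i, α i * y i) = 0 ∧
  (∀ i, 1 ≤ y i * (⟪w, x i⟫ + b)) ∧
  (∀ i, 0 < α i → y i * (⟪w, x i⟫ + b) = 1)

theorem hard_margin_is_mdp_of_support_vectors {n : ℕ} (x : Fin n → E) (y : Fin n → ℝ)
    (hy : ∀ i, y i = 1 ∨ y i = -1)
    (hpos : ∃ i, y i = 1) (hneg : ∃ i, y i = -1)
    (w : E) (b : ℝ) (α : Fin n → ℝ) (hw : w ≠ 0)
    (hkkt : HardKKT x y w b α) :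
    w ∈ vectorSpan ℝ (x '' {i | α i ≠ 0}) ∧
    (∀ i, α i ≠ 0 → y i * (⟪w, x i⟫ + b) = 1) ∧
    (AffineIndependent ℝ (fun i : {i // α i ≠ 0} => x i) →
      ∀ u ∈ vectorSpan ℝ (x '' {i | α i ≠ 0}), PilingOn x y {i | α i ≠ 0} u →
        ∃ t : ℝ, t ≠ 0 ∧ u = t • w) := by
  obtain ⟨h0, hw_eq, hsum, hfeas, hcomp⟩ := hkkt
  -- there is a support vector
  have hV : ∃ i₀, α i₀ ≠ 0 := by
    by_contra h
    push_neg at h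
    apply hw
    rw [hw_eq]
    simp [h]
  obtain ⟨i₀, hi₀⟩ := hV
  -- (ii)
  have hii : ∀ i, α i ≠ 0 → y i * (⟪w, x i⟫ + b) = 1 := fun i hi =>
    hcomp i (lt_of_le_of_ne (h0 i) (Ne.symm hi))
  -- (i)
  have hmem : w ∈ vectorSpan ℝ (x '' {i | α i ≠ 0}) := by
    have hrw : w = ∑ i, (α i * y i) • (x i - x i₀) := by
      rw [hw_eq]
      simp only [smul_sub, Finset.sum_sub_distrib, ← Finset.sum_smul, hsum, zero_smul,
        sub_zero]
    rw [hrw]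
    apply Submodule.sum_mem
    intro i _
    by_cases h : α i = 0
    · simp [h]
    · have := vsub_mem_vectorSpan ℝ (Set.mem_image_of_mem x (show i ∈ {i | α i ≠ 0} from h))
        (Set.mem_image_of_mem x (show i₀ ∈ {i | α i ≠ 0} from hi₀))
      exact Submodule.smul_mem _ _ this
  refine ⟨hmem, hii, ?_⟩
  intro _hindep u hu hpile
  obtain ⟨a, c, ha, hpu⟩ := hpile
  -- inner products of w on support vectors
  have hwinner : ∀ i, α i ≠ 0 → ⟪w, x i⟫ = y i - b := by
    intro i hi
    have h1 := hii i hi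
    rcases hy i with h | h <;> rw [h] at h1 ⊢ <;> linarith
  set v := u - a • w with hv
  have hvmem : v ∈ vectorSpan ℝ (x '' {i | α i ≠ 0}) :=
    Submodule.sub_mem _ hu (Submodule.smul_mem _ _ hmem)
  have hvconst : ∀ i, α i ≠ 0 → ⟪v, x i⟫ = c + a * b := by
    intro i hi
    rw [hv, inner_sub_left, real_inner_smul_left, hwinner i hi, hpu i hi]
    ring
  have hv0 : ∀ z ∈ vectorSpan ℝ (x '' {i | α i ≠ 0}), ⟪v, z⟫ = 0 := by
    intro z hz
    rw [vectorSpan_def] at hz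
    induction hz using Submodule.span_induction with
    | mem p hp =>
      obtain ⟨p1, hp1, p2, hp2, rfl⟩ := Set.mem_vsub.mp hp
      obtain ⟨i, hi, rfl⟩ := hp1
      obtain ⟨j, hj, rfl⟩ := hp2
      rw [vsub_eq_sub, inner_sub_right, hvconst i hi, hvconst j hj, sub_self]
    | zero => simp
    | add _ _ _ _ h1 h2 => rw [inner_add_right, h1, h2, add_zero]
    | smul t _ _ h1 => rw [real_inner_smul_right, h1, mul_zero]
  have hvz : v = 0 := by
    have := hv0 v hvmem
    exact inner_self_eq_zero.mp this
  refine ⟨a, ha, ?_⟩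
  have : u - a • w = 0 := hvz
  linear_combination (norm := abel) this
end

section
/- Suppose (w, b) together with multipliers α satisfies the soft margin KKT conditions at cost C > 0, and C * max(n₊, n₋) * D² < 2 (i.e., C < C_small). Then at least one class consists entirely of slack vectors: (∀ i ∈ I₊, y i * (⟪w, x i⟫ + b) < 1) or (∀ i ∈ I₋, y i * (⟪w, x i⟫ + b) < 1). Moreover, if the classes are unbalanced with n₋ < n₊, then every point of the smaller class I₋ is a slack vector. -/
open scoped RealInnerProductSpace BigOperators

variable {E : Type*} [NormedAddCommGroup E] [InnerProductSpace ℝ E]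

/-- The two-class diameter. -/
noncomputable def twoClassDiam {n : ℕ} (x : Fin n → E) (y : Fin n → ℝ) : ℝ :=
  sSup {d : ℝ | ∃ i j, y i = 1 ∧ y j = -1 ∧ d = ‖x i - x j‖}

/-- The soft margin KKT conditions at cost `C` for `(w, b)` with multipliers `α`. -/
def SoftKKT {n : ℕ} (x : Fin n → E) (y : Fin n → ℝ) (C : ℝ) (w : E) (b : ℝ)
    (α : Fin n → ℝ) : Prop :=
  (∀ i, 0 ≤ α i ∧ α i ≤ C) ∧
  w = (∑ i ∈ posSet y, α i • x i) - (∑ i ∈ negSet y, α i • x i) ∧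
  (∑ i ∈ posSet y, α i) = (∑ i ∈ negSet y, α i) ∧
  (∀ i, α i < C → 1 ≤ y i * (⟪w, x i⟫ + b)) ∧
  (∀ i, y i * (⟪w, x i⟫ + b) < 1 → α i = C) ∧
  (∀ i, 0 < α i → y i * (⟪w, x i⟫ + b) ≤ 1)

theorem small_C_gives_total_slack {n : ℕ} (x : Fin n → E) (y : Fin n → ℝ)
    (hy : ∀ i, y i = 1 ∨ y i = -1)
    (hpos : ∃ i, y i = 1) (hneg : ∃ i, y i = -1)
    (C : ℝ) (hC : 0 < C) (w : E) (b : ℝ) (α : Fin n → ℝ)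
    (hkkt : SoftKKT x y C w b α)
    (hsmall : C * (max (posSet y).card (negSet y).card : ℝ) * twoClassDiam x y ^ 2 < 2) :
    ((∀ i ∈ posSet y, y i * (⟪w, x i⟫ + b) < 1) ∨
      (∀ i ∈ negSet y, y i * (⟪w, x i⟫ + b) < 1)) ∧
    ((negSet y).card < (posSet y).card →
      ∀ i ∈ negSet y, y i * (⟪w, x i⟫ + b) < 1) := by
  classical
  obtain ⟨hbox, hw, hsum, hmarg, hslack, hsup⟩ := hkkt
  have hmemP : ∀ i, i ∈ posSet y ↔ y i = 1 := fun i => by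
    simp [posSet, Finset.mem_filter]
  have hmemN : ∀ i, i ∈ negSet y ↔ y i = -1 := fun i => by
    simp [negSet, Finset.mem_filter]
  have hfin : ({d : ℝ | ∃ i j, y i = 1 ∧ y j = -1 ∧ d = ‖x i - x j‖}).Finite := by
    apply Set.Finite.subset (Set.finite_range fun p : Fin n × Fin n => ‖x p.1 - x p.2‖)
    rintro d ⟨i, j, _, _, rfl⟩
    exact ⟨(i, j), rfl⟩
  have hDle : ∀ i ∈ posSet y, ∀ j ∈ negSet y, ‖x i - x j‖ ≤ twoClassDiam x y := by
    intro i hi j hj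
    exact le_csSup hfin.bddAbove ⟨i, j, (hmemP i).mp hi, (hmemN j).mp hj, rfl⟩
  have hD0 : 0 ≤ twoClassDiam x y := by
    obtain ⟨i0, hi0⟩ := hpos; obtain ⟨j0, hj0⟩ := hneg
    exact le_trans (norm_nonneg _)
      (hDle i0 ((hmemP i0).mpr hi0) j0 ((hmemN j0).mpr hj0))
  have key : ∀ i0 ∈ posSet y, ∀ j0 ∈ negSet y,
      1 ≤ y i0 * (⟪w, x i0⟫ + b) → 1 ≤ y j0 * (⟪w, x j0⟫ + b) → False := by
    intro i0 hi0 j0 hj0 h1 h2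
    have hyi : y i0 = 1 := (hmemP i0).mp hi0
    have hyj : y j0 = -1 := (hmemN j0).mp hj0
    rw [hyi, one_mul] at h1
    rw [hyj] at h2
    set u := x i0 - x j0 with hu
    have hu2 : (2:ℝ) ≤ ⟪w, u⟫ := by
      rw [hu, inner_sub_right]; linarith
    set S := ∑ i ∈ posSet y, α i with hSdef
    have hS0 : 0 ≤ S := Finset.sum_nonneg fun i _ => (hbox i).1
    rcases eq_or_lt_of_le hS0 with hS | hS
    · have hP0 : ∀ i ∈ posSet y, α i = 0 :=
        (Finset.sum_eq_zero_iff_of_nonneg fun i _ => (hbox i).1).mp hS.symm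
      have hN0 : ∀ i ∈ negSet y, α i = 0 := by
        apply (Finset.sum_eq_zero_iff_of_nonneg fun i _ => (hbox i).1).mp
        rw [← hsum]; exact hS.symm
      have hw0 : w = 0 := by
        rw [hw, Finset.sum_eq_zero (fun i hi => by rw [hP0 i hi, zero_smul]),
          Finset.sum_eq_zero (fun i hi => by rw [hN0 i hi, zero_smul]), sub_zero]
      rw [hw0, inner_zero_left] at hu2
      norm_num at hu2
    · have hule : ‖u‖ ≤ twoClassDiam x y := by
        rw [hu]; exact hDle i0 hi0 j0 hj0
      have hA : ⟪w, u⟫ = (∑ i ∈ posSet y, α i * ⟪x i, u⟫)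
          - (∑ j ∈ negSet y, α j * ⟪x j, u⟫) := by
        rw [hw, inner_sub_left, sum_inner, sum_inner]
        simp_rw [real_inner_smul_left]
      have e1 : ∀ i, ∑ j ∈ negSet y, α i * α j * (⟪x i, u⟫ - ⟪x j, u⟫)
          = (α i * ⟪x i, u⟫) * (∑ j ∈ negSet y, α j)
            - α i * (∑ j ∈ negSet y, α j * ⟪x j, u⟫) := by
        intro i
        rw [Finset.mul_sum, Finset.mul_sum, ← Finset.sum_sub_distrib]
        exact Finset.sum_congr rfl fun j _ => by ring
      have hsum1 : ∑ i ∈ posSet y, ∑ j ∈ negSet y, α i * α j * (⟪x i, u⟫ - ⟪x j, u⟫)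
          = S * ⟪w, u⟫ := by
        simp_rw [e1]
        rw [Finset.sum_sub_distrib, ← Finset.sum_mul, ← Finset.sum_mul, hA,
          ← hsum, ← hSdef]
        ring
      have hterm : ∀ i ∈ posSet y, ∀ j ∈ negSet y,
          α i * α j * (⟪x i, u⟫ - ⟪x j, u⟫) ≤ α i * α j * (twoClassDiam x y ^ 2) := by
        intro i hi j hj
        apply mul_le_mul_of_nonneg_left _ (mul_nonneg (hbox i).1 (hbox j).1)
        calc ⟪x i, u⟫ - ⟪x j, u⟫ = ⟪x i - x j, u⟫ := (inner_sub_left _ _ _).symm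
          _ ≤ ‖x i - x j‖ * ‖u‖ := real_inner_le_norm _ _
          _ ≤ twoClassDiam x y * twoClassDiam x y :=
              mul_le_mul (hDle i hi j hj) hule (norm_nonneg _) hD0
          _ = twoClassDiam x y ^ 2 := (sq _).symm
      have hub : ∑ i ∈ posSet y, ∑ j ∈ negSet y, α i * α j * (⟪x i, u⟫ - ⟪x j, u⟫)
          ≤ S * S * twoClassDiam x y ^ 2 := by
        calc ∑ i ∈ posSet y, ∑ j ∈ negSet y, α i * α j * (⟪x i, u⟫ - ⟪x j, u⟫)
            ≤ ∑ i ∈ posSet y, ∑ j ∈ negSet y, α i * α j * twoClassDiam x y ^ 2 :=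
              Finset.sum_le_sum fun i hi => Finset.sum_le_sum fun j hj => hterm i hi j hj
          _ = (∑ i ∈ posSet y, α i) * (∑ j ∈ negSet y, α j) * twoClassDiam x y ^ 2 := by
              rw [Finset.sum_mul_sum, Finset.sum_mul]
              exact Finset.sum_congr rfl fun i _ => by rw [Finset.sum_mul]
          _ = S * S * twoClassDiam x y ^ 2 := by rw [← hsum, ← hSdef]
      have hSw : S * ⟪w, u⟫ ≤ S * S * twoClassDiam x y ^ 2 := hsum1 ▸ hub
      have h4 : 2 ≤ S * twoClassDiam x y ^ 2 := by nlinarith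
      have h2' : S ≤ C * (posSet y).card := by
        calc S = ∑ i ∈ posSet y, α i := hSdef
          _ ≤ ∑ _i ∈ posSet y, C := Finset.sum_le_sum fun i _ => (hbox i).2
          _ = (posSet y).card * C := by rw [Finset.sum_const, nsmul_eq_mul]
          _ = C * (posSet y).card := mul_comm _ _
      have h3 : ((posSet y).card : ℝ) ≤ ((max (posSet y).card (negSet y).card : ℕ) : ℝ) := by
        exact_mod_cast le_max_left _ _
      have h5 : S * twoClassDiam x y ^ 2
          ≤ C * ((max (posSet y).card (negSet y).card : ℕ) : ℝ) * twoClassDiam x y ^ 2 := by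
        apply mul_le_mul_of_nonneg_right _ (sq_nonneg _)
        calc S ≤ C * (posSet y).card := h2'
          _ ≤ _ := mul_le_mul_of_nonneg_left h3 hC.le
      rw [Nat.cast_max] at h5
      linarith
  have hfirst : (∀ i ∈ posSet y, y i * (⟪w, x i⟫ + b) < 1) ∨
      (∀ i ∈ negSet y, y i * (⟪w, x i⟫ + b) < 1) := by
    by_contra hcon
    push_neg at hcon
    obtain ⟨⟨i0, hi0, hi0'⟩, ⟨j0, hj0, hj0'⟩⟩ := hcon
    exact key i0 hi0 j0 hj0 hi0' hj0'
  refine ⟨hfirst, fun hlt j hj => ?_⟩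
  by_contra hj1
  have hallP : ∀ i ∈ posSet y, y i * (⟪w, x i⟫ + b) < 1 := by
    rcases hfirst with h | h
    · exact h
    · exact absurd (h j hj) hj1
  have hPC : ∀ i ∈ posSet y, α i = C := fun i hi => hslack i (hallP i hi)
  have hPsum : ∑ i ∈ posSet y, α i = ((posSet y).card : ℝ) * C := by
    rw [Finset.sum_congr rfl hPC, Finset.sum_const, nsmul_eq_mul]
  have hNsum : ∑ i ∈ negSet y, α i ≤ ((negSet y).card : ℝ) * C := by
    calc ∑ i ∈ negSet y, α i ≤ ∑ _i ∈ negSet y, C :=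
          Finset.sum_le_sum fun i _ => (hbox i).2
      _ = _ := by rw [Finset.sum_const, nsmul_eq_mul]
  have hle : ((posSet y).card : ℝ) * C ≤ ((negSet y).card : ℝ) * C := by
    rw [← hPsum, hsum]; exact hNsum
  have hcc : ((posSet y).card : ℝ) ≤ ((negSet y).card : ℝ) :=
    le_of_mul_le_mul_right hle hC
  exact absurd (Nat.cast_le.mp hcc) (not_le.mpr hlt)
end

section
/- Suppose (w, b) together with multipliers α satisfies the soft margin KKT conditions at cost C > 0, the classes are balanced with n₊ = n₋ = m > 0, and every point of the negative class is a slack vector (y i * (⟪w, x i⟫ + b) < 1 for all i ∈ I₋). Then α i = C for every i = 1,…,n and w = (C * m) • (x̄₊ − x̄₋); in particular the SVM direction is proportional to the mean difference direction. -/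
open scoped RealInnerProductSpace BigOperators

variable {E : Type*} [NormedAddCommGroup E] [InnerProductSpace ℝ E]

theorem balanced_small_C_svm_is_mean_difference {n : ℕ} (x : Fin n → E) (y : Fin n → ℝ)
    (hy : ∀ i, y i = 1 ∨ y i = -1)
    (hpos : ∃ i, y i = 1) (hneg : ∃ i, y i = -1)
    (C : ℝ) (hC : 0 < C) (w : E) (b : ℝ) (α : Fin n → ℝ)
    (hkkt : SoftKKT x y C w b α)
    (m : ℕ) (hm : 0 < m)
    (hbal : (posSet y).card = m ∧ (negSet y).card = m)
    (hslack : ∀ i ∈ negSet y, y i * (⟪w, x i⟫ + b) < 1) :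
    (∀ i, α i = C) ∧ w = (C * (m : ℝ)) • meanDiff x y := by
  obtain ⟨hbox, hw, hsum, _, hcomp, _⟩ := hkkt
  obtain ⟨hp, hn⟩ := hbal
  have hneg' : ∀ i ∈ negSet y, α i = C := fun i hi => hcomp i (hslack i hi)
  have hsumneg : ∑ i ∈ negSet y, α i = C * m := by
    rw [Finset.sum_congr rfl hneg', Finset.sum_const, hn, nsmul_eq_mul, mul_comm]
  have hsumpos : ∑ i ∈ posSet y, α i = C * m := hsum.trans hsumneg
  have hpos' : ∀ i ∈ posSet y, α i = C := by
    intro i hi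
    by_contra h
    have hlt : α i < C := lt_of_le_of_ne (hbox i).2 h
    have hlt2 : ∑ j ∈ posSet y, α j < ∑ _j ∈ posSet y, C :=
      Finset.sum_lt_sum (fun j _ => (hbox j).2) ⟨i, hi, hlt⟩
    rw [hsumpos, Finset.sum_const, hp, nsmul_eq_mul, mul_comm] at hlt2
    exact lt_irrefl _ hlt2
  have hall : ∀ i, α i = C := by
    intro i
    rcases hy i with h | h
    · exact hpos' i (by simp [posSet, h])
    · exact hneg' i (by simp [negSet, h])
  refine ⟨hall, ?_⟩
  have hm' : (m : ℝ) ≠ 0 := Nat.cast_ne_zero.mpr hm.ne'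
  have h1 : ∑ i ∈ posSet y, α i • x i = C • ∑ i ∈ posSet y, x i := by
    rw [Finset.smul_sum]; exact Finset.sum_congr rfl fun i hi => by rw [hpos' i hi]
  have h2 : ∑ i ∈ negSet y, α i • x i = C • ∑ i ∈ negSet y, x i := by
    rw [Finset.smul_sum]; exact Finset.sum_congr rfl fun i hi => by rw [hneg' i hi]
  rw [hw, h1, h2, meanDiff, hp, hn, smul_sub, smul_smul, smul_smul,
    mul_assoc, mul_inv_cancel₀ hm', mul_one]
end

section
/- Suppose (w, b) together with multipliers α satisfies the soft margin KKT conditions at cost C > 0, the classes are unbalanced with n₋ < n₊, and every point of the negative class is a slack vector. Let L₊ = {i ∈ I₊ : y i * (⟪w, x i⟫ + b) < 1} be the slack vectors of the positive class. Then: (i) α i = C for every i ∈ I₋ and every i ∈ L₊; (ii) w = Σ_{i∈I₊} α i • x i − C • Σ_{i∈I₋} x i; and (iii) Σ_{i ∈ I₊ \ L₊} α i = C * (n₋ − |L₊|). That is, w is a cropped mean difference direction. -/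
open scoped RealInnerProductSpace BigOperators

variable {E : Type*} [NormedAddCommGroup E] [InnerProductSpace ℝ E]

open Classical in
/-- The slack vectors of the positive class. -/
noncomputable def slackPos {n : ℕ} (x : Fin n → E) (y : Fin n → ℝ) (w : E) (b : ℝ) :
    Finset (Fin n) :=
  (posSet y).filter (fun i => y i * (⟪w, x i⟫ + b) < 1)

theorem unbalanced_small_C_svm_is_cropped_mean_difference {n : ℕ}
    (x : Fin n → E) (y : Fin n → ℝ)
    (hy : ∀ i, y i = 1 ∨ y i = -1)
    (hpos : ∃ i, y i = 1) (hneg : ∃ i, y i = -1)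
    (C : ℝ) (hC : 0 < C) (w : E) (b : ℝ) (α : Fin n → ℝ)
    (hkkt : SoftKKT x y C w b α)
    (hunbal : (negSet y).card < (posSet y).card)
    (hslack : ∀ i ∈ negSet y, y i * (⟪w, x i⟫ + b) < 1) :
    ((∀ i ∈ negSet y, α i = C) ∧ (∀ i ∈ slackPos x y w b, α i = C)) ∧
    w = (∑ i ∈ posSet y, α i • x i) - C • (∑ i ∈ negSet y, x i) ∧
    (∑ i ∈ posSet y \ slackPos x y w b, α i) =
      C * (((negSet y).card : ℝ) - ((slackPos x y w b).card : ℝ)) := by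
  obtain ⟨hbox, hw, hbal, h1, h2, h3⟩ := hkkt
  have hnegC : ∀ i ∈ negSet y, α i = C := fun i hi => h2 i (hslack i hi)
  have hslackC : ∀ i ∈ slackPos x y w b, α i = C := by
    intro i hi
    exact h2 i (Finset.mem_filter.mp hi).2
  have hsub : slackPos x y w b ⊆ posSet y := Finset.filter_subset _ _
  refine ⟨⟨hnegC, hslackC⟩, ?_, ?_⟩
  · rw [hw, Finset.smul_sum]
    congr 1
    exact Finset.sum_congr rfl fun i hi => by rw [hnegC i hi]
  · have hnegsum : (∑ i ∈ negSet y, α i) = C * (negSet y).card := by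
      rw [Finset.sum_congr rfl hnegC, Finset.sum_const, nsmul_eq_mul, mul_comm]
    have hsplit : (∑ i ∈ posSet y, α i)
        = (∑ i ∈ posSet y \ slackPos x y w b, α i) + ∑ i ∈ slackPos x y w b, α i :=
      (Finset.sum_sdiff hsub).symm
    have hslsum : (∑ i ∈ slackPos x y w b, α i) = C * (slackPos x y w b).card := by
      rw [Finset.sum_congr rfl hslackC, Finset.sum_const, nsmul_eq_mul, mul_comm]
    have := hbal
    rw [hsplit, hnegsum, hslsum] at this
    linarith [this]
end

section
/- Suppose (w, b) together with multipliers α satisfies the soft margin KKT conditions at cost C > 0 and n₋ ≤ n₊. Then the larger (positive) class has at most n₋ slack vectors: |{i ∈ I₊ : y i * (⟪w, x i⟫ + b) < 1}| ≤ n₋. Consequently, if the positive class has more than n₋ support vectors, at least one of them is a margin vector (a support vector with y i * (⟪w, x i⟫ + b) = 1). -/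
open scoped RealInnerProductSpace BigOperators

variable {E : Type*} [NormedAddCommGroup E] [InnerProductSpace ℝ E]

open Classical in
/-- The support vectors of the positive class. -/
noncomputable def supportPos {n : ℕ} (y : Fin n → ℝ) (α : Fin n → ℝ) : Finset (Fin n) :=
  (posSet y).filter (fun i => α i ≠ 0)

theorem larger_class_slack_vector_bound {n : ℕ}
    (x : Fin n → E) (y : Fin n → ℝ)
    (hy : ∀ i, y i = 1 ∨ y i = -1)
    (hpos : ∃ i, y i = 1) (hneg : ∃ i, y i = -1)
    (C : ℝ) (hC : 0 < C) (w : E) (b : ℝ) (α : Fin n → ℝ)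
    (hkkt : SoftKKT x y C w b α)
    (hsize : (negSet y).card ≤ (posSet y).card) :
    (slackPos x y w b).card ≤ (negSet y).card ∧
    ((negSet y).card < (supportPos y α).card →
      ∃ i ∈ posSet y, α i ≠ 0 ∧ y i * (⟪w, x i⟫ + b) = 1) := by

  obtain ⟨hbox, -, hsum, -, hslack, hsupp⟩ := hkkt
  have hmain : (slackPos x y w b).card ≤ (negSet y).card := by
    have h1 : (C * (slackPos x y w b).card : ℝ) = ∑ i ∈ slackPos x y w b, α i := by
      have hc : ∀ i ∈ slackPos x y w b, α i = C := fun i hi =>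
        hslack i (Finset.mem_filter.mp hi).2
      rw [Finset.sum_congr rfl hc, Finset.sum_const, nsmul_eq_mul, mul_comm]
    have h2 : ∑ i ∈ slackPos x y w b, α i ≤ ∑ i ∈ posSet y, α i :=
      Finset.sum_le_sum_of_subset_of_nonneg (Finset.filter_subset _ _)
        (fun i _ _ => (hbox i).1)
    have h3 : ∑ i ∈ negSet y, α i ≤ C * (negSet y).card := by
      calc ∑ i ∈ negSet y, α i ≤ ∑ _i ∈ negSet y, C :=
            Finset.sum_le_sum (fun i _ => (hbox i).2)
        _ = C * (negSet y).card := by simp [mul_comm]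
    have := h1 ▸ (h2.trans (hsum ▸ h3))
    exact_mod_cast le_of_mul_le_mul_left this hC
  refine ⟨hmain, fun hlt => ?_⟩
  have : ¬ supportPos y α ⊆ slackPos x y w b := fun hsub =>
    absurd (Finset.card_le_card hsub) (by omega)
  obtain ⟨i, hi, hni⟩ := Finset.not_subset.mp this
  obtain ⟨hip, hia⟩ := Finset.mem_filter.mp hi
  refine ⟨i, hip, hia, le_antisymm (hsupp i (lt_of_le_of_ne (hbox i).1 (Ne.symm hia))) ?_⟩
  by_contra h
  exact hni (Finset.mem_filter.mpr ⟨hip, lt_of_not_ge h⟩)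
end

section
/- Let E = EuclideanSpace ℝ (Fin d) with d ≥ 1. Suppose the data points are in general position in the sense that the map x is injective and every subfamily of the data points of size at most d + 1 is affinely independent. Suppose (w, b) together with multipliers α satisfies the soft margin KKT conditions at cost C > 0, with w ≠ 0, and n₋ ≤ n₊. Then the larger (positive) class has at most n₋ + d − 1 support vectors: |{i ∈ I₊ : α i ≠ 0}| ≤ n₋ + d − 1. -/
open scoped RealInnerProductSpace BigOperators

variable {E : Type*} [NormedAddCommGroup E] [InnerProductSpace ℝ E]

theorem larger_class_support_vector_bound {d n : ℕ} (hd : 1 ≤ d)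
    (x : Fin n → EuclideanSpace ℝ (Fin d)) (y : Fin n → ℝ)
    (hy : ∀ i, y i = 1 ∨ y i = -1)
    (hpos : ∃ i, y i = 1) (hneg : ∃ i, y i = -1)
    (hinj : Function.Injective x)
    (hgen : ∀ s : Finset (Fin n), s.card ≤ d + 1 →
      AffineIndependent ℝ (fun i : s => x i.1))
    (C : ℝ) (hC : 0 < C) (w : EuclideanSpace ℝ (Fin d)) (b : ℝ) (α : Fin n → ℝ)
    (hkkt : SoftKKT x y C w b α) (hw : w ≠ 0)
    (hsize : (negSet y).card ≤ (posSet y).card) :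
    (supportPos y α).card ≤ (negSet y).card + d - 1 := by
  classical
  obtain ⟨hbound, hw_eq, hsum, hlo, hhi, hub⟩ := hkkt
  set S := supportPos y α with hSdef
  set A := S.filter (fun i => α i = C) with hAdef
  set B := S.filter (fun i => ¬ α i = C) with hBdef
  have hSsub : S ⊆ posSet y := by
    rw [hSdef, supportPos]; exact Finset.filter_subset _ _
  have hSmem : ∀ i ∈ S, y i = 1 ∧ α i ≠ 0 := by
    intro i hi
    have := hSsub hi
    rw [posSet, Finset.mem_filter] at this
    rw [hSdef, supportPos, Finset.mem_filter] at hi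
    exact ⟨this.2, hi.2⟩
  have hAB : A ∪ B = S := Finset.filter_union_filter_not_eq _ S
  have hABd : Disjoint A B := Finset.disjoint_filter_filter_not S S _
  have hcard : S.card = A.card + B.card := by
    rw [← hAB, Finset.card_union_of_disjoint hABd]
  -- B points lie on the margin hyperplane
  have hBm : ∀ i ∈ B, ⟪w, x i⟫ = 1 - b := by
    intro i hi
    rw [hBdef, Finset.mem_filter] at hi
    obtain ⟨hiS, hane⟩ := hi
    obtain ⟨hy1, ha0⟩ := hSmem i hiS
    have h1 := hlo i (lt_of_le_of_ne (hbound i).2 hane)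
    have h2 := hub i (lt_of_le_of_ne (hbound i).1 (Ne.symm ha0))
    rw [hy1, one_mul] at h1 h2
    linarith
  -- bound on B.card
  have hBd : B.card ≤ d := by
    by_contra h
    push_neg at h
    obtain ⟨s, hsB, hscard⟩ := Finset.exists_subset_card_eq h
    have hai : AffineIndependent ℝ (fun i : s => x i.1) := hgen s (by omega)
    have hfin : (Fintype.card s) = d + 1 := by
      rw [Fintype.card_coe]; exact hscard
    have hdim := hai.finrank_vectorSpan hfin
    set f := ((innerSL ℝ w : EuclideanSpace ℝ (Fin d) →L[ℝ] ℝ) : EuclideanSpace ℝ (Fin d) →ₗ[ℝ] ℝ) with hf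
    have hker : vectorSpan ℝ (Set.range (fun i : s => x i.1)) ≤ LinearMap.ker f := by
      rw [vectorSpan_def]
      rw [Submodule.span_le]
      rintro v hv
      obtain ⟨v1, hv1, v2, hv2, rfl⟩ := hv
      obtain ⟨⟨i, hi⟩, rfl⟩ := hv1
      obtain ⟨⟨j, hj⟩, rfl⟩ := hv2
      have h1 := hBm i (hsB hi)
      have h2 := hBm j (hsB hj)
      simp only [SetLike.mem_coe, LinearMap.mem_ker]
      have : f (x i -ᵥ x j) = ⟪w, x i⟫ - ⟪w, x j⟫ := by
        simp [hf, inner_sub_right]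
      rw [this, h1, h2]; ring
    have hle := Submodule.finrank_mono hker
    have hrk := LinearMap.finrank_range_add_finrank_ker f
    have hE : Module.finrank ℝ (EuclideanSpace ℝ (Fin d)) = d := finrank_euclideanSpace_fin
    have hrpos : 0 < Module.finrank ℝ (LinearMap.range f) := by
      rw [Module.finrank_pos_iff_exists_ne_zero]
      refine ⟨⟨f w, ⟨w, rfl⟩⟩, ?_⟩
      intro hcontra
      have : f w = 0 := by
        have := congrArg Subtype.val hcontra
        simpa using this
      rw [hf] at this
      simp only [ContinuousLinearMap.coe_coe, innerSL_apply_apply] at this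
      exact hw (inner_self_eq_zero.mp this)
    omega
  -- sums
  have hApos : ∀ i ∈ A, α i = C := by
    intro i hi; rw [hAdef, Finset.mem_filter] at hi; exact hi.2
  have hsumA : ∑ i ∈ A, α i = A.card * C := by
    rw [Finset.sum_congr rfl hApos, Finset.sum_const, nsmul_eq_mul]
  have hAsub : A ⊆ posSet y := fun i hi => hSsub (Finset.mem_of_mem_filter i hi)
  have hAle : ∑ i ∈ A, α i ≤ ∑ i ∈ posSet y, α i := by
    apply Finset.sum_le_sum_of_subset_of_nonneg hAsub
    intro i _ _; exact (hbound i).1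
  have hnegle : ∑ i ∈ negSet y, α i ≤ (negSet y).card * C := by
    calc ∑ i ∈ negSet y, α i ≤ ∑ _i ∈ negSet y, C :=
          Finset.sum_le_sum (fun i _ => (hbound i).2)
      _ = (negSet y).card * C := by rw [Finset.sum_const, nsmul_eq_mul]
  have hAcard : A.card ≤ (negSet y).card := by
    have : (A.card : ℝ) * C ≤ (negSet y).card * C := by
      calc (A.card : ℝ) * C = ∑ i ∈ A, α i := hsumA.symm
        _ ≤ ∑ i ∈ posSet y, α i := hAle
        _ = ∑ i ∈ negSet y, α i := hsum
        _ ≤ (negSet y).card * C := hnegle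
    have := le_of_mul_le_mul_right this hC
    exact_mod_cast this
  have hnneg : 1 ≤ (negSet y).card := by
    obtain ⟨i, hi⟩ := hneg
    apply Finset.card_pos.mpr
    exact ⟨i, by rw [negSet, Finset.mem_filter]; exact ⟨Finset.mem_univ i, hi⟩⟩
  rcases Finset.eq_empty_or_nonempty B with hBe | hBne
  · rw [hcard, hBe, Finset.card_empty]
    omega
  · -- strict: A.card < negSet.card
    have hBpos : 0 < ∑ i ∈ B, α i := by
      apply Finset.sum_pos _ hBne
      intro i hi
      have hiS : i ∈ S := Finset.mem_of_mem_filter i hi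
      exact lt_of_le_of_ne (hbound i).1 (Ne.symm (hSmem i hiS).2)
    have hUle : ∑ i ∈ A ∪ B, α i ≤ ∑ i ∈ posSet y, α i := by
      apply Finset.sum_le_sum_of_subset_of_nonneg (by rw [hAB]; exact hSsub)
      intro i _ _; exact (hbound i).1
    have hUsum : ∑ i ∈ A ∪ B, α i = ∑ i ∈ A, α i + ∑ i ∈ B, α i :=
      Finset.sum_union hABd
    have hstrict : (A.card : ℝ) * C < (negSet y).card * C := by
      calc (A.card : ℝ) * C = ∑ i ∈ A, α i := hsumA.symm
        _ < ∑ i ∈ A ∪ B, α i := by rw [hUsum]; linarith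
        _ ≤ ∑ i ∈ posSet y, α i := hUle
        _ = ∑ i ∈ negSet y, α i := hsum
        _ ≤ (negSet y).card * C := hnegle
    have hAlt : A.card < (negSet y).card := by
      have := lt_of_mul_lt_mul_right hstrict (le_of_lt hC)
      exact_mod_cast this
    omega
end

section
/- Suppose the data are linearly separable, i.e., there exists (w₀, b₀) with y i * (⟪w₀, x i⟫ + b₀) ≥ 1 for all i, so that the two-class gap satisfies G > 0. Suppose C > 2/G² (i.e., C > C_large). If (w, b, ξ) minimizes the soft margin objective ½‖w‖² + C * Σ_i ξ i over the set {(w, b, ξ) : y i * (⟪w, x i⟫ + b) ≥ 1 − ξ i and ξ i ≥ 0 for all i}, then ξ i = 0 for all i and (w, b) is a hard margin solution, i.e., it is hard-margin feasible and minimizes ½‖w‖² over all hard-margin feasible pairs. -/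
open scoped RealInnerProductSpace BigOperators

variable {E : Type*} [NormedAddCommGroup E] [InnerProductSpace ℝ E]

/-- The two-class gap: the infimum distance between the convex hulls of the two classes. -/
noncomputable def twoClassGap {n : ℕ} (x : Fin n → E) (y : Fin n → ℝ) : ℝ :=
  sInf {g : ℝ | ∃ cp ∈ convexHull ℝ (x '' {i | y i = 1}),
    ∃ cm ∈ convexHull ℝ (x '' {i | y i = -1}), g = ‖cp - cm‖}

/-- `(w, b, ξ)` is feasible for the soft margin SVM problem. -/
def SoftFeasible {n : ℕ} (x : Fin n → E) (y : Fin n → ℝ) (w : E) (b : ℝ)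
    (ξ : Fin n → ℝ) : Prop :=
  ∀ i, 1 - ξ i ≤ y i * (⟪w, x i⟫ + b) ∧ 0 ≤ ξ i

/-- The soft margin SVM objective at cost `C`. -/
noncomputable def softObjective {n : ℕ} (C : ℝ) (w : E) (ξ : Fin n → ℝ) : ℝ :=
  (1 / 2) * ‖w‖ ^ 2 + C * ∑ i, ξ i

/-!
Let `p`, `m` be a closest pair of points of the convex hulls of the two classes, so that
`G = ‖p - m‖`. Soft feasibility of `(w, b, ξ)` gives `⟪w, ·⟫ + b ≥ 1 - ξ₊` on the positive hull
and `⟪w, ·⟫ + b ≤ -1 + ξ₋` on the negative one, where `ξ₊ + ξ₋ ≤ ∑ ξ` are the slacks of the two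
classes (bounding each by `∑ ξ` would lose a factor 2 and miss the threshold `2 / G²`); hence
`2 - ∑ ξ ≤ ⟪w, p - m⟫ ≤ ‖w‖ G`, and a separating pair forces `G > 0`. Conversely the
closest pair makes `(2 / G²) (p - m)` hard feasible, with objective `2 / G²`, so a soft minimizer
has `½ ‖w‖² + C ∑ ξ ≤ 2 / G²`. Once `C G² > 2` these two bounds force `∑ ξ = 0`.
-/

theorem eq_zero_of_sub_le_mul_of_half_sq_add_mul_le {a g c s : ℝ} (hg : 0 < g) (hs : 0 ≤ s)
    (hmargin : 2 - s ≤ a * g) (hc : 2 < c * g ^ 2)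
    (hobj : 1 / 2 * a ^ 2 + c * s ≤ 2 / g ^ 2) : s = 0 := by
  have hobj' : 1 / 2 * (a * g) ^ 2 + c * g ^ 2 * s ≤ 2 := by
    have := mul_le_mul_of_nonneg_right hobj (sq_nonneg g)
    rw [div_mul_cancel₀ _ (by positivity)] at this
    linarith
  refine le_antisymm ?_ hs
  rcases le_or_gt s 2 with h2 | h2
  · nlinarith [mul_self_le_mul_self (by linarith : (0 : ℝ) ≤ 2 - s) hmargin]
  · nlinarith [sq_nonneg (a * g)]

section ConvexHull

variable {s t : Set E} {w u v : E}

theorem le_inner_of_mem_convexHull_s17 {r : ℝ} (h : ∀ z ∈ s, r ≤ ⟪w, z⟫)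
    (hu : u ∈ convexHull ℝ s) : r ≤ ⟪w, u⟫ :=
  convexHull_min h (convex_halfSpace_ge (innerₛₗ ℝ w).isLinear r) hu

theorem inner_le_of_mem_convexHull_s17 {r : ℝ} (h : ∀ z ∈ s, ⟪w, z⟫ ≤ r)
    (hu : u ∈ convexHull ℝ s) : ⟪w, u⟫ ≤ r :=
  convexHull_min h (convex_halfSpace_le (innerₛₗ ℝ w).isLinear r) hu

theorem sub_le_inner_sub_of_mem_convexHull {a c : ℝ} (hs : ∀ z ∈ s, a ≤ ⟪w, z⟫)
    (ht : ∀ z ∈ t, ⟪w, z⟫ ≤ c) (hu : u ∈ convexHull ℝ s) (hv : v ∈ convexHull ℝ t) :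
    a - c ≤ ⟪w, u - v⟫ := by
  rw [inner_sub_right]
  linarith [le_inner_of_mem_convexHull_s17 hs hu, inner_le_of_mem_convexHull_s17 ht hv]

end ConvexHull

section ClosestPair

theorem IsCompact.exists_forall_norm_sub_le {F : Type*} [NormedAddCommGroup F] {s t : Set F}
    (hs : IsCompact s) (ht : IsCompact t) (hs₀ : s.Nonempty) (ht₀ : t.Nonempty) :
    ∃ p ∈ s, ∃ m ∈ t, ∀ u ∈ s, ∀ v ∈ t, ‖p - m‖ ≤ ‖u - v‖ := by
  obtain ⟨⟨p, m⟩, ⟨hp, hm⟩, hmin⟩ := (hs.prod ht).exists_isMinOn (hs₀.prod ht₀)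
    (by fun_prop : Continuous fun q : F × F => ‖q.1 - q.2‖).continuousOn
  exact ⟨p, hp, m, hm, fun u hu v hv => hmin (Set.mk_mem_prod hu hv)⟩

variable {s t : Set E} {p m : E}

theorem inner_sub_le_inner_sub_of_forall_norm_sub_le (hs : Convex ℝ s) (hp : p ∈ s)
    (hmin : ∀ u ∈ s, ‖p - m‖ ≤ ‖u - m‖) {u : E} (hu : u ∈ s) :
    ⟪p - m, p⟫ ≤ ⟪p - m, u⟫ := by
  have : Nonempty s := ⟨⟨p, hp⟩⟩
  have hinf : ‖m - p‖ = ⨅ u : s, ‖m - u‖ := by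
    refine le_antisymm (le_ciInf fun u => ?_)
      (ciInf_le (f := fun u : s => ‖m - u‖) ⟨0, ?_⟩ ⟨p, hp⟩)
    · rw [norm_sub_rev, norm_sub_rev m]
      exact hmin u u.2
    · rintro _ ⟨u, rfl⟩
      exact norm_nonneg _
  have := (norm_eq_iInf_iff_real_inner_le_zero hs hp).1 hinf u hu
  simp only [inner_sub_left, inner_sub_right] at this ⊢
  linarith

theorem inner_sub_le_inner_sub_of_closest_pair (hs : Convex ℝ s) (ht : Convex ℝ t)
    (hp : p ∈ s) (hm : m ∈ t) (hmin : ∀ u ∈ s, ∀ v ∈ t, ‖p - m‖ ≤ ‖u - v‖) :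
    (∀ u ∈ s, ⟪p - m, p⟫ ≤ ⟪p - m, u⟫) ∧ ∀ v ∈ t, ⟪p - m, v⟫ ≤ ⟪p - m, m⟫ := by
  refine ⟨fun u hu => inner_sub_le_inner_sub_of_forall_norm_sub_le hs hp
    (fun u hu => hmin u hu m hm) hu, fun v hv => ?_⟩
  have := inner_sub_le_inner_sub_of_forall_norm_sub_le ht hm
    (fun v hv => by rw [norm_sub_rev m, norm_sub_rev v]; exact hmin p hp v hv) hv
  rw [← neg_sub p m, inner_neg_left, inner_neg_left] at this
  linarith

end ClosestPair

section SVM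

variable {n : ℕ} {x : Fin n → E} {y : Fin n → ℝ}

def classHull (x : Fin n → E) (y : Fin n → ℝ) (c : ℝ) : Set E :=
  convexHull ℝ (x '' {i | y i = c})

theorem mem_classHull {c : ℝ} {i : Fin n} (hi : y i = c) : x i ∈ classHull x y c :=
  subset_convexHull ℝ _ ⟨i, hi, rfl⟩

theorem classHull_nonempty {c : ℝ} (h : ∃ i, y i = c) : (classHull x y c).Nonempty :=
  let ⟨i, hi⟩ := h; ⟨x i, mem_classHull hi⟩

theorem isCompact_classHull (c : ℝ) : IsCompact (classHull x y c) :=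
  ((Set.toFinite _).image x).isCompact_convexHull ℝ

theorem convex_classHull (c : ℝ) : Convex ℝ (classHull x y c) :=
  convex_convexHull ℝ _

theorem twoClassGap_eq_norm_sub {p m : E} (hp : p ∈ classHull x y 1) (hm : m ∈ classHull x y (-1))
    (hmin : ∀ u ∈ classHull x y 1, ∀ v ∈ classHull x y (-1), ‖p - m‖ ≤ ‖u - v‖) :
    twoClassGap x y = ‖p - m‖ :=
  IsLeast.csInf_eq ⟨⟨p, hp, m, hm, rfl⟩, by rintro _ ⟨u, hu, v, hv, rfl⟩; exact hmin u hu v hv⟩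

theorem softFeasible_zero_iff {w : E} {b : ℝ} :
    SoftFeasible x y w b 0 ↔ HardFeasible x y w b := by
  simp [SoftFeasible, HardFeasible]

theorem softObjective_zero {F : Type*} [NormedAddCommGroup F] (C : ℝ) (w : F) :
    softObjective C w (0 : Fin n → ℝ) = 1 / 2 * ‖w‖ ^ 2 := by
  simp [softObjective]

theorem softObjective_two_div_norm_sq_smul {d : E} (hd : d ≠ 0) (C : ℝ) :
    softObjective C ((2 / ‖d‖ ^ 2) • d) (0 : Fin n → ℝ) = 2 / ‖d‖ ^ 2 := by
  have : ‖d‖ ≠ 0 := norm_ne_zero_iff.2 hd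
  rw [softObjective_zero, norm_smul, Real.norm_of_nonneg (by positivity)]
  field_simp

theorem two_sub_sum_le_inner_sub_of_softFeasible {w : E} {b : ℝ} {ξ : Fin n → ℝ}
    (hfeas : SoftFeasible x y w b ξ) {p m : E} (hp : p ∈ classHull x y 1)
    (hm : m ∈ classHull x y (-1)) :
    2 - ∑ i, ξ i ≤ ⟪w, p - m⟫ := by
  classical
  set ξpos := ∑ i ∈ Finset.univ.filter (y · = 1), ξ i
  set ξneg := ∑ i ∈ Finset.univ.filter (y · = -1), ξ i
  have hξ : ∀ i, 0 ≤ ξ i := fun i => (hfeas i).2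
  have hsplit : ξpos + ξneg ≤ ∑ i, ξ i := by
    rw [← Finset.sum_union (Finset.disjoint_filter.2 fun i _ h₁ h₂ => by norm_num [h₁] at h₂)]
    exact Finset.sum_le_sum_of_subset_of_nonneg (Finset.subset_univ _) fun i _ _ => hξ i
  have hpos : ∀ z ∈ x '' {i | y i = 1}, 1 - ξpos - b ≤ ⟪w, z⟫ := by
    rintro _ ⟨i, hi, rfl⟩
    have h := (hfeas i).1
    have hle : ξ i ≤ ξpos := Finset.single_le_sum (fun j _ => hξ j) (by simpa using hi)
    rw [show y i = 1 from hi] at h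
    linarith
  have hneg : ∀ z ∈ x '' {i | y i = -1}, ⟪w, z⟫ ≤ -1 + ξneg - b := by
    rintro _ ⟨i, hi, rfl⟩
    have h := (hfeas i).1
    have hle : ξ i ≤ ξneg := Finset.single_le_sum (fun j _ => hξ j) (by simpa using hi)
    rw [show y i = -1 from hi] at h
    linarith
  linarith [sub_le_inner_sub_of_mem_convexHull hpos hneg hp hm]

theorem HardFeasible.ne_of_mem_classHull {w : E} {b : ℝ} (h : HardFeasible x y w b) {p m : E}
    (hp : p ∈ classHull x y 1) (hm : m ∈ classHull x y (-1)) : p ≠ m := by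
  rintro rfl
  have := two_sub_sum_le_inner_sub_of_softFeasible (softFeasible_zero_iff.2 h) hp hm
  norm_num at this

theorem hardFeasible_of_closest_pair (hy : ∀ i, y i = 1 ∨ y i = -1) {p m : E}
    (hp : p ∈ classHull x y 1) (hm : m ∈ classHull x y (-1))
    (hmin : ∀ u ∈ classHull x y 1, ∀ v ∈ classHull x y (-1), ‖p - m‖ ≤ ‖u - v‖) (hpm : p ≠ m) :
    HardFeasible x y ((2 / ‖p - m‖ ^ 2) • (p - m)) (1 - 2 / ‖p - m‖ ^ 2 * ⟪p - m, p⟫) := by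
  obtain ⟨hpos, hneg⟩ :=
    inner_sub_le_inner_sub_of_closest_pair (convex_classHull _) (convex_classHull _) hp hm hmin
  have hd : 0 < ‖p - m‖ ^ 2 := pow_pos (norm_pos_iff.2 (sub_ne_zero.2 hpm)) 2
  have hK : 0 < 2 / ‖p - m‖ ^ 2 := by positivity
  have hgap : ⟪p - m, p⟫ - ⟪p - m, m⟫ = ‖p - m‖ ^ 2 := by
    rw [← inner_sub_right, real_inner_self_eq_norm_sq]
  intro i
  rw [real_inner_smul_left]
  rcases hy i with hi | hi
  · rw [hi]
    nlinarith [hpos _ (mem_classHull hi)]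
  · have hKd : 2 / ‖p - m‖ ^ 2 * ‖p - m‖ ^ 2 = 2 := div_mul_cancel₀ _ hd.ne'
    rw [hi]
    nlinarith [hneg _ (mem_classHull hi)]

theorem hardSolution_of_forall_softObjective_le {C : ℝ} {w : E} {b : ℝ}
    (hfeas : HardFeasible x y w b)
    (hmin : ∀ w' : E, ∀ b' : ℝ, ∀ ξ' : Fin n → ℝ, SoftFeasible x y w' b' ξ' →
      softObjective C w (0 : Fin n → ℝ) ≤ softObjective C w' ξ') :
    HardSolution x y w b := by
  refine ⟨hfeas, fun w' b' hw' => ?_⟩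
  simpa only [softObjective_zero] using hmin w' b' 0 (softFeasible_zero_iff.2 hw')

end SVM

theorem large_C_soft_margin_is_hard_margin {n : ℕ} (x : Fin n → E) (y : Fin n → ℝ)
    (hy : ∀ i, y i = 1 ∨ y i = -1)
    (hpos : ∃ i, y i = 1) (hneg : ∃ i, y i = -1)
    (hsep : ∃ w₀ : E, ∃ b₀ : ℝ, HardFeasible x y w₀ b₀)
    (C : ℝ) (hC : 2 / twoClassGap x y ^ 2 < C)
    (w : E) (b : ℝ) (ξ : Fin n → ℝ)
    (hfeas : SoftFeasible x y w b ξ)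
    (hmin : ∀ w' : E, ∀ b' : ℝ, ∀ ξ' : Fin n → ℝ, SoftFeasible x y w' b' ξ' →
      softObjective C w ξ ≤ softObjective C w' ξ') :
    (∀ i, ξ i = 0) ∧ HardSolution x y w b := by
  obtain ⟨p, hp, m, hm, hclosest⟩ := IsCompact.exists_forall_norm_sub_le
    (isCompact_classHull (x := x) 1) (isCompact_classHull (-1))
    (classHull_nonempty hpos) (classHull_nonempty hneg)
  rw [twoClassGap_eq_norm_sub hp hm hclosest] at hC
  obtain ⟨w₀, b₀, h₀⟩ := hsep
  have hpm : p ≠ m := h₀.ne_of_mem_classHull hp hm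
  have hG : 0 < ‖p - m‖ := norm_pos_iff.2 (sub_ne_zero.2 hpm)
  have hobj := hmin _ _ 0
    (softFeasible_zero_iff.2 (hardFeasible_of_closest_pair hy hp hm hclosest hpm))
  rw [softObjective_two_div_norm_sq_smul (sub_ne_zero.2 hpm)] at hobj
  have hmargin := (two_sub_sum_le_inner_sub_of_softFeasible hfeas hp hm).trans
    (real_inner_le_norm w (p - m))
  have hξ₀ : ∀ i, 0 ≤ ξ i := fun i => (hfeas i).2
  have hsum : ∑ i, ξ i = 0 := eq_zero_of_sub_le_mul_of_half_sq_add_mul_le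
    hG (Finset.sum_nonneg fun i _ => hξ₀ i) hmargin
    (by rwa [div_lt_iff₀ (by positivity)] at hC) hobj
  obtain rfl : ξ = 0 := funext fun i =>
    (Finset.sum_eq_zero_iff_of_nonneg fun j _ => hξ₀ j).1 hsum i (Finset.mem_univ i)
  exact ⟨fun _ => rfl, hardSolution_of_forall_softObjective_le (softFeasible_zero_iff.1 hfeas) hmin⟩
end

section
/- Suppose (w, b) together with multipliers α satisfies the hard margin KKT conditions. Then ‖w‖² = Σ_{i=1}^n α i; equivalently, the margin ρ = 1/‖w‖ satisfies ρ² = 1/(Σ_i α i) whenever w ≠ 0. -/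
open scoped RealInnerProductSpace BigOperators

variable {E : Type*} [NormedAddCommGroup E] [InnerProductSpace ℝ E]

theorem hard_margin_norm_sq_eq_sum_multipliers {n : ℕ} (x : Fin n → E) (y : Fin n → ℝ)
    (hy : ∀ i, y i = 1 ∨ y i = -1)
    (hpos : ∃ i, y i = 1) (hneg : ∃ i, y i = -1)
    (w : E) (b : ℝ) (α : Fin n → ℝ)
    (hkkt : HardKKT x y w b α) :
    ‖w‖ ^ 2 = ∑ i, α i ∧
      (w ≠ 0 → (1 / ‖w‖) ^ 2 = 1 / ∑ i, α i) := by
  obtain ⟨hα, hw, hsum, hfeas, hcomp⟩ := hkkt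
  have key : ‖w‖ ^ 2 = ∑ i, α i := by
    have h1 : ‖w‖ ^ 2 = ⟪w, w⟫ := (real_inner_self_eq_norm_sq w).symm
    have h2 : ⟪w, w⟫ = ∑ i, (α i * y i) * ⟪w, x i⟫ := by
      conv_lhs => rw [show (w : E) = ∑ i, (α i * y i) • x i from hw]
      rw [inner_sum]
      simp [real_inner_smul_right, ← hw]
    have h3 : ∀ i, (α i * y i) * ⟪w, x i⟫ = α i - b * (α i * y i) := by
      intro i
      rcases eq_or_lt_of_le (hα i) with h | h
      · simp [← h]
      · have hc := hcomp i h
        have hy2 : y i * y i = 1 := by rcases hy i with h' | h' <;> simp [h']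
        have : y i * ⟪w, x i⟫ = 1 - y i * b := by nlinarith [hc]
        nlinarith [this]
    rw [h1, h2]
    simp only [h3]
    rw [Finset.sum_sub_distrib, ← Finset.mul_sum, hsum]
    ring
  refine ⟨key, fun hw0 => ?_⟩
  rw [← key]
  have : ‖w‖ ≠ 0 := norm_ne_zero_iff.mpr hw0
  field_simp
end
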